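/- arXiv:2401.05062 — 10 statements merged into one kernel-verified Lean document; each statement's English description precedes it below -/
import Mathlib

section
/- Let I, J ⊆ ℝ be open intervals and let d₁, d₂ : I × J → ℝ be smooth functions that vanish nowhere. Set l = d₁ + d₂ and suppose that for all (x,y) ∈ I × J one has ∂l/∂x(x,y) = coth(d₁(x,y)) and ∂l/∂y(x,y) = coth(d₂(x,y)), and that the function H(x,y) = log(sinh²(d₁(x,y))/sinh²(d₂(x,y))) satisfies ∂²H/∂x∂y = 0 on I × J. Then there exists a constant η ∈ ℝ such that one of the following four alternatives holds for all (x,y) ∈ I × J: (1) there is a constant C ∈ ℝ with cosh(l(x,y)) = −cosh(y − x − C) + η·e^{x+y}; (2) there is a constant C ∈ ℝ with cosh(l(x,y)) = cosh(y − x − C) + η·e^{x+y}; (3) there are constants a, b ∈ ℝ with (1 + a·e^{2x})(1 + b·e^{2y}) > 0 for all (x,y) ∈ I × J and cosh(l(x,y)) = −√((1 + a·e^{2x})(1 + b·e^{2y})) + η·e^{x+y}; (4) there are constants a, b ∈ ℝ with (1 + a·e^{2x})(1 + b·e^{2y}) > 0 for all (x,y) ∈ I × J and cosh(l(x,y)) =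 √((1 + a·e^{2x})(1 + b·e^{2y})) + η·e^{x+y}. -/
set_option maxHeartbeats 2000000

noncomputable def coth (t : ℝ) : ℝ := Real.cosh t / Real.sinh t

lemma aux_const {s : Set ℝ} (hs : Convex ℝ s) (ho : IsOpen s) {f : ℝ → ℝ}
    (h : ∀ x ∈ s, HasDerivAt f 0 x) {x y : ℝ} (hx : x ∈ s) (hy : y ∈ s) :
    f x = f y := by
  apply hs.is_const_of_fderivWithin_eq_zero (𝕜 := ℝ)
    (fun z hz => (h z hz).differentiableAt.differentiableWithinAt) _ hx hy
  intro z hz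
  have h1 : fderiv ℝ f z = 0 := by
    have := (h z hz).hasFDerivAt.fderiv
    rw [this]; ext t; simp
  rw [fderivWithin_of_isOpen ho hz, h1]

lemma aux_sign {s : Set (ℝ × ℝ)} (hs : IsPreconnected s) {f : ℝ × ℝ → ℝ}
    (hf : ContinuousOn f s) (hne : ∀ p ∈ s, f p ≠ 0) {p q : ℝ × ℝ}
    (hp : p ∈ s) (hq : q ∈ s) (hfp : 0 < f p) : 0 < f q := by
  by_contra h
  have hq' : f q < 0 := lt_of_le_of_ne (not_lt.1 h) (hne q hq)
  have himg : (f '' s).OrdConnected := (hs.image f hf).ordConnected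
  have h0 : (0 : ℝ) ∈ f '' s := by
    have := himg.out (Set.mem_image_of_mem f hq) (Set.mem_image_of_mem f hp)
    exact this ⟨hq'.le, hfp.le⟩
  obtain ⟨z, hz, hz0⟩ := h0
  exact hne z hz hz0

lemma aux_hyp (a b : ℝ) (ha : Real.sinh a ≠ 0) :
    Real.sinh (a + b) * (Real.cosh a / Real.sinh a)
      = Real.cosh (a + b) + Real.sinh b / Real.sinh a := by
  rw [Real.sinh_add, Real.cosh_add]
  field_simp
  linear_combination Real.sinh b * Real.cosh_sq a

lemma aux_sliceX {s : Set (ℝ × ℝ)} (ho : IsOpen s) {F : Type*} [NormedAddCommGroup F]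
    [NormedSpace ℝ F] {f : ℝ × ℝ → F}
    (hf : ContDiffOn ℝ (⊤ : ℕ∞) f s) {x y : ℝ} (h : (x, y) ∈ s) :
    DifferentiableAt ℝ (fun t => f (t, y)) x := by
  have h1 : ContDiffAt ℝ (⊤ : ℕ∞) f (x, y) := hf.contDiffAt (ho.mem_nhds h)
  have h2 : ContDiffAt ℝ (⊤ : ℕ∞) (fun t : ℝ => (t, y)) x :=
    (contDiff_id.prodMk contDiff_const).contDiffAt
  exact (h1.comp x h2).differentiableAt (by simp)

lemma aux_sliceY {s : Set (ℝ × ℝ)} (ho : IsOpen s) {F : Type*} [NormedAddCommGroup F]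
    [NormedSpace ℝ F] {f : ℝ × ℝ → F}
    (hf : ContDiffOn ℝ (⊤ : ℕ∞) f s) {x y : ℝ} (h : (x, y) ∈ s) :
    DifferentiableAt ℝ (fun t => f (x, t)) y := by
  have h1 : ContDiffAt ℝ (⊤ : ℕ∞) f (x, y) := hf.contDiffAt (ho.mem_nhds h)
  have h2 : ContDiffAt ℝ (⊤ : ℕ∞) (fun t : ℝ => (x, t)) y :=
    (contDiff_const.prodMk contDiff_id).contDiffAt
  exact (h1.comp y h2).differentiableAt (by simp)

lemma aux_final {I J : Set ℝ} (hI : Convex ℝ I) (hIo : IsOpen I) (hJ : Convex ℝ J)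
    (hJo : IsOpen J)
    {x₀ y₀ : ℝ} (hx₀ : x₀ ∈ I) (hy₀ : y₀ ∈ J) {w : ℝ → ℝ → ℝ}
    (hwx : ∀ x ∈ I, ∀ y ∈ J, HasDerivAt (fun t => w t y) (w x y) x)
    (hwy : ∀ y ∈ J, HasDerivAt (fun s => w x₀ s) (w x₀ y) y)
    {x y : ℝ} (hx : x ∈ I) (hy : y ∈ J) :
    w x y = w x₀ y₀ * Real.exp (x + y - x₀ - y₀) := by
  have key : ∀ (f : ℝ → ℝ) (s : Set ℝ), Convex ℝ s → IsOpen s →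
      (∀ t ∈ s, HasDerivAt f (f t) t) →
      ∀ t ∈ s, ∀ t' ∈ s, f t = f t' * Real.exp (t - t') := by
    intro f s hs hso hf t ht t' ht'
    have hc : ∀ t ∈ s, HasDerivAt (fun z => Real.exp (-z) * f z)
        0 t := by
      intro z hz
      have h1 : HasDerivAt (fun z : ℝ => Real.exp (-z)) (-Real.exp (-z)) z := by
        simpa using ((hasDerivAt_id z).neg.exp)
      have := h1.mul (hf z hz)
      exact this.congr_deriv (by ring)
    have := aux_const hs hso hc ht ht'
    have h4 : f t = Real.exp t * (Real.exp (-t) * f t) := by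
      rw [← mul_assoc, ← Real.exp_add]; simp
    rw [h4, this, Real.exp_neg, Real.exp_sub]
    field_simp
  have h1 : w x y = w x₀ y * Real.exp (x - x₀) :=
    key (fun t => w t y) I hI hIo (fun t ht => hwx t ht y hy) x hx x₀ hx₀
  have h2 : w x₀ y = w x₀ y₀ * Real.exp (y - y₀) :=
    key (fun s => w x₀ s) J hJ hJo hwy y hy y₀ hy₀
  rw [h1, h2, mul_assoc, ← Real.exp_add]
  ring_nf

/-- Classification of discrete conformal structures restricted to a single edge. -/
theorem classification_single_edge
    (I J : Set ℝ) (hIopen : IsOpen I) (hIconn : I.OrdConnected)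
    (hJopen : IsOpen J) (hJconn : J.OrdConnected)
    (d₁ d₂ : ℝ × ℝ → ℝ)
    (hd₁smooth : ContDiffOn ℝ (⊤ : ℕ∞) d₁ (I ×ˢ J))
    (hd₂smooth : ContDiffOn ℝ (⊤ : ℕ∞) d₂ (I ×ˢ J))
    (hd₁ne : ∀ p ∈ I ×ˢ J, d₁ p ≠ 0)
    (hd₂ne : ∀ p ∈ I ×ˢ J, d₂ p ≠ 0)
    (l : ℝ × ℝ → ℝ) (hl : l = d₁ + d₂)
    (hlx : ∀ x ∈ I, ∀ y ∈ J, deriv (fun t => l (t, y)) x = coth (d₁ (x, y)))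
    (hly : ∀ x ∈ I, ∀ y ∈ J, deriv (fun s => l (x, s)) y = coth (d₂ (x, y)))
    (H : ℝ × ℝ → ℝ)
    (hH : H = fun p => Real.log (Real.sinh (d₁ p) ^ 2 / Real.sinh (d₂ p) ^ 2))
    (hHmixed : ∀ x ∈ I, ∀ y ∈ J,
      deriv (fun s => deriv (fun t => H (t, s)) x) y = 0) :
    ∃ η : ℝ,
      (∃ C : ℝ, ∀ x ∈ I, ∀ y ∈ J,
        Real.cosh (l (x, y)) = -Real.cosh (y - x - C) + η * Real.exp (x + y)) ∨
      (∃ C : ℝ, ∀ x ∈ I, ∀ y ∈ J,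
        Real.cosh (l (x, y)) = Real.cosh (y - x - C) + η * Real.exp (x + y)) ∨
      (∃ a b : ℝ,
        (∀ x ∈ I, ∀ y ∈ J,
          (1 + a * Real.exp (2 * x)) * (1 + b * Real.exp (2 * y)) > 0) ∧
        (∀ x ∈ I, ∀ y ∈ J,
          Real.cosh (l (x, y)) =
            -Real.sqrt ((1 + a * Real.exp (2 * x)) * (1 + b * Real.exp (2 * y)))
              + η * Real.exp (x + y))) ∨
      (∃ a b : ℝ,
        (∀ x ∈ I, ∀ y ∈ J,
          (1 + a * Real.exp (2 * x)) * (1 + b * Real.exp (2 * y)) > 0) ∧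
        (∀ x ∈ I, ∀ y ∈ J,
          Real.cosh (l (x, y)) =
            Real.sqrt ((1 + a * Real.exp (2 * x)) * (1 + b * Real.exp (2 * y)))
              + η * Real.exp (x + y))) := by
  by_cases hIne : I.Nonempty
  swap
  · exact ⟨0, Or.inl ⟨0, fun x hx => absurd ⟨x, hx⟩ hIne⟩⟩
  by_cases hJne : J.Nonempty
  swap
  · exact ⟨0, Or.inl ⟨0, fun x hx y hy => absurd ⟨y, hy⟩ hJne⟩⟩
  obtain ⟨x₀, hx₀⟩ := hIne
  obtain ⟨y₀, hy₀⟩ := hJne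
  have hUo : IsOpen (I ×ˢ J) := hIopen.prod hJopen
  have hIc : Convex ℝ I := hIconn.convex
  have hJc : Convex ℝ J := hJconn.convex
  have hUc : Convex ℝ (I ×ˢ J) := hIc.prod hJc
  have hA : ∀ p ∈ I ×ˢ J, Real.sinh (d₁ p) ≠ 0 := fun p hp => by
    simpa [Real.sinh_eq_zero] using hd₁ne p hp
  have hB : ∀ p ∈ I ×ˢ J, Real.sinh (d₂ p) ≠ 0 := fun p hp => by
    simpa [Real.sinh_eq_zero] using hd₂ne p hp
  have hlsmooth : ContDiffOn ℝ (⊤ : ℕ∞) l (I ×ˢ J) := by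
    rw [hl]; exact hd₁smooth.add hd₂smooth
  have hlp : ∀ p : ℝ × ℝ, l p = d₁ p + d₂ p := fun p => by rw [hl]; rfl
  -- x-derivative of cosh ∘ l
  have hux : ∀ x ∈ I, ∀ y ∈ J, HasDerivAt (fun t => Real.cosh (l (t, y)))
      (Real.cosh (l (x, y)) + Real.sinh (d₂ (x, y)) / Real.sinh (d₁ (x, y))) x := by
    intro x hx y hy
    have hm : (x, y) ∈ I ×ˢ J := Set.mk_mem_prod hx hy
    have hd : HasDerivAt (fun t => l (t, y))
        (Real.cosh (d₁ (x, y)) / Real.sinh (d₁ (x, y))) x := by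
      have := (aux_sliceX hUo hlsmooth hm).hasDerivAt
      rwa [hlx x hx y hy] at this
    have h1 := hd.cosh
    have h2 : Real.sinh (l (x, y)) * (Real.cosh (d₁ (x, y)) / Real.sinh (d₁ (x, y)))
        = Real.cosh (l (x, y)) + Real.sinh (d₂ (x, y)) / Real.sinh (d₁ (x, y)) := by
      rw [hlp (x, y)]; exact aux_hyp _ _ (hA _ hm)
    rwa [h2] at h1
  have huy : ∀ x ∈ I, ∀ y ∈ J, HasDerivAt (fun s => Real.cosh (l (x, s)))
      (Real.cosh (l (x, y)) + Real.sinh (d₁ (x, y)) / Real.sinh (d₂ (x, y))) y := by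
    intro x hx y hy
    have hm : (x, y) ∈ I ×ˢ J := Set.mk_mem_prod hx hy
    have hd : HasDerivAt (fun s => l (x, s))
        (Real.cosh (d₂ (x, y)) / Real.sinh (d₂ (x, y))) y := by
      have := (aux_sliceY hUo hlsmooth hm).hasDerivAt
      rwa [hly x hx y hy] at this
    have h1 := hd.cosh
    have h2 : Real.sinh (l (x, y)) * (Real.cosh (d₂ (x, y)) / Real.sinh (d₂ (x, y)))
        = Real.cosh (l (x, y)) + Real.sinh (d₁ (x, y)) / Real.sinh (d₂ (x, y)) := by
      rw [hlp (x, y), add_comm (d₁ (x, y))]; exact aux_hyp _ _ (hB _ hm)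
    rwa [h2] at h1
  -- smoothness of H
  have hHsmooth : ContDiffOn ℝ (⊤ : ℕ∞) H (I ×ˢ J) := by
    rw [hH]
    have h1 : ContDiffOn ℝ (⊤ : ℕ∞) (fun p => Real.sinh (d₁ p) ^ 2) (I ×ˢ J) :=
      (Real.contDiff_sinh.comp_contDiffOn hd₁smooth).pow 2
    have h2 : ContDiffOn ℝ (⊤ : ℕ∞) (fun p => Real.sinh (d₂ p) ^ 2) (I ×ˢ J) :=
      (Real.contDiff_sinh.comp_contDiffOn hd₂smooth).pow 2
    have hne2 : ∀ p ∈ I ×ˢ J, Real.sinh (d₂ p) ^ 2 ≠ 0 :=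
      fun p hp => pow_ne_zero 2 (hB p hp)
    have h3 := h1.div h2 hne2
    exact h3.log fun p hp => div_ne_zero (pow_ne_zero 2 (hA p hp)) (hne2 p hp)
  have hHdiffX : ∀ x ∈ I, ∀ y ∈ J, DifferentiableAt ℝ (fun t => H (t, y)) x :=
    fun x hx y hy => aux_sliceX hUo hHsmooth (Set.mk_mem_prod hx hy)
  -- the partial derivative ∂ₓH equals the full derivative applied to (1,0)
  have hHx_eq : ∀ x ∈ I, ∀ y ∈ J,
      deriv (fun t => H (t, y)) x = fderiv ℝ H (x, y) (1, 0) := by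
    intro x hx y hy
    have hm : (x, y) ∈ I ×ˢ J := Set.mk_mem_prod hx hy
    have hdH : DifferentiableAt ℝ H (x, y) :=
      (hHsmooth.contDiffAt (hUo.mem_nhds hm)).differentiableAt (by simp)
    have hcurve : HasDerivAt (fun t : ℝ => (t, y)) ((1 : ℝ), (0 : ℝ)) x :=
      (hasDerivAt_id x).prodMk (hasDerivAt_const x y)
    have := hdH.hasFDerivAt.comp_hasDerivAt x hcurve
    exact this.deriv
  -- ∂ₓ H is constant in y
  have hHxconst : ∀ x ∈ I, ∀ y ∈ J,
      deriv (fun t => H (t, y)) x = deriv (fun t => H (t, y₀)) x := by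
    intro x hx y hy
    have hfds : ContDiffOn ℝ (⊤ : ℕ∞) (fderiv ℝ H) (I ×ˢ J) :=
      hHsmooth.fderiv_of_isOpen hUo (by simp)
    have hder0 : ∀ s ∈ J, HasDerivAt (fun s => deriv (fun t => H (t, s)) x) 0 s := by
      intro s hs
      have hm : (x, s) ∈ I ×ˢ J := Set.mk_mem_prod hx hs
      have hd1 : DifferentiableAt ℝ (fun s' => fderiv ℝ H (x, s')) s :=
        aux_sliceY hUo hfds hm
      have hd2 : DifferentiableAt ℝ (fun s' => fderiv ℝ H (x, s') (1, 0)) s :=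
        hd1.clm_apply (differentiableAt_const _)
      have heq : (fun s' => deriv (fun t => H (t, s')) x)
          =ᶠ[nhds s] (fun s' => fderiv ℝ H (x, s') (1, 0)) := by
        filter_upwards [hJopen.mem_nhds hs] with s' hs'
        exact hHx_eq x hx s' hs'
      have hd3 : DifferentiableAt ℝ (fun s' => deriv (fun t => H (t, s')) x) s :=
        hd2.congr_of_eventuallyEq heq
      have := hd3.hasDerivAt
      rwa [hHmixed x hx s hs] at this
    exact aux_const hJc hJopen hder0 hy hy₀
  -- H separates as F x + G y
  have hHsep : ∀ x ∈ I, ∀ y ∈ J,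
      H (x, y) = H (x, y₀) + (H (x₀, y) - H (x₀, y₀)) := by
    intro x hx y hy
    have hc : ∀ z ∈ I, HasDerivAt (fun t => H (t, y) - H (t, y₀)) 0 z := by
      intro z hz
      have h1 := (hHdiffX z hz y hy).hasDerivAt
      have h2 := (hHdiffX z hz y₀ hy₀).hasDerivAt
      have h3 := h1.sub h2
      rw [hHxconst z hz y hy, sub_self] at h3
      exact h3
    have := aux_const hIc hIopen hc hx hx₀
    linarith [this]
  set F : ℝ → ℝ := fun x => H (x, y₀) with hFdef
  set G : ℝ → ℝ := fun y => H (x₀, y) - H (x₀, y₀) with hGdef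
  set Qf : ℝ × ℝ → ℝ := fun p => Real.sinh (d₁ p) / Real.sinh (d₂ p) with hQdef
  have hQne : ∀ p ∈ I ×ˢ J, Qf p ≠ 0 := fun p hp => div_ne_zero (hA p hp) (hB p hp)
  have hQsq : ∀ x ∈ I, ∀ y ∈ J, Qf (x, y) ^ 2 = Real.exp (F x + G y) := by
    intro x hx y hy
    have hm : (x, y) ∈ I ×ˢ J := Set.mk_mem_prod hx hy
    have h2 : (0 : ℝ) < Qf (x, y) ^ 2 :=
      lt_of_le_of_ne (sq_nonneg _) (Ne.symm (pow_ne_zero 2 (hQne _ hm)))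
    have h1 : H (x, y) = Real.log (Qf (x, y) ^ 2) := by
      rw [hH, hQdef]; simp only [div_pow]
    have h3 : F x + G y = H (x, y) := by
      have := hHsep x hx y hy; rw [hFdef, hGdef]; simp only; linarith
    rw [h3, h1, Real.exp_log h2]
  set σ : ℝ := if 0 < Qf (x₀, y₀) then 1 else -1 with hσdef
  have hσsq : σ ^ 2 = 1 := by
    rw [hσdef]; split <;> norm_num
  have hσne : σ ≠ 0 := by rw [hσdef]; split <;> norm_num
  set α : ℝ → ℝ := fun x => σ * Real.exp (F x / 2) with hαdef
  set β : ℝ → ℝ := fun y => Real.exp (G y / 2) with hβdef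
  have hβpos : ∀ y, 0 < β y := fun y => Real.exp_pos _
  have hβne : ∀ y, β y ≠ 0 := fun y => (hβpos y).ne'
  have hαne : ∀ x, α x ≠ 0 := fun x => mul_ne_zero hσne (Real.exp_ne_zero _)
  have hQcont : ContinuousOn Qf (I ×ˢ J) :=
    (Real.continuous_sinh.comp_continuousOn hd₁smooth.continuousOn).div
      (Real.continuous_sinh.comp_continuousOn hd₂smooth.continuousOn) hB
  have hsignQ : ∀ p ∈ I ×ˢ J, 0 < σ * Qf p := by
    intro p hp
    have hm₀ : (x₀, y₀) ∈ I ×ˢ J := Set.mk_mem_prod hx₀ hy₀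
    rw [hσdef]
    split_ifs with h
    · simpa using aux_sign hUc.isPreconnected hQcont hQne hm₀ hp h
    · have h0 : 0 < -Qf (x₀, y₀) :=
        neg_pos.mpr (lt_of_le_of_ne (not_lt.1 h) (hQne _ hm₀))
      have := aux_sign hUc.isPreconnected hQcont.neg
        (fun q hq => neg_ne_zero.mpr (hQne q hq)) hm₀ hp h0
      simpa using this
  have hexphalf : ∀ t : ℝ, Real.exp (t / 2) ^ 2 = Real.exp t := by
    intro t; rw [pow_two, ← Real.exp_add, add_halves]
  have hQαβ : ∀ x ∈ I, ∀ y ∈ J, Qf (x, y) = α x * β y := by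
    intro x hx y hy
    have hm : (x, y) ∈ I ×ˢ J := Set.mk_mem_prod hx hy
    have h1 : Qf (x, y) ^ 2 = (α x * β y) ^ 2 := by
      rw [hQsq x hx y hy, hαdef, hβdef]
      simp only [mul_pow, hσsq, one_mul, hexphalf, ← Real.exp_add]
    rcases sq_eq_sq_iff_eq_or_eq_neg.mp h1 with h | h
    · exact h
    · exfalso
      have h2 : 0 < σ * Qf (x, y) := hsignQ _ hm
      have h3 : 0 < σ * (α x * β y) := by
        rw [hαdef, hβdef]
        have : σ * (σ * Real.exp (F x / 2) * Real.exp (G y / 2))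
            = Real.exp (F x / 2) * Real.exp (G y / 2) := by
          rw [← mul_assoc, ← mul_assoc, ← pow_two, hσsq, one_mul]
        rw [this]
        positivity
      rw [h] at h2
      nlinarith
  -- derivatives of cosh ∘ l in terms of α, β
  have hux' : ∀ x ∈ I, ∀ y ∈ J, HasDerivAt (fun t => Real.cosh (l (t, y)))
      (Real.cosh (l (x, y)) + (α x * β y)⁻¹) x := by
    intro x hx y hy
    have h := hux x hx y hy
    have h2 : Real.sinh (d₂ (x, y)) / Real.sinh (d₁ (x, y)) = (α x * β y)⁻¹ := by
      rw [← hQαβ x hx y hy, hQdef]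
      simp only
      rw [inv_div]
    rwa [h2] at h
  have huy' : ∀ x ∈ I, ∀ y ∈ J, HasDerivAt (fun s => Real.cosh (l (x, s)))
      (Real.cosh (l (x, y)) + α x * β y) y := by
    intro x hx y hy
    have h := huy x hx y hy
    have h2 : Real.sinh (d₁ (x, y)) / Real.sinh (d₂ (x, y)) = α x * β y := by
      rw [← hQαβ x hx y hy, hQdef]
    rwa [h2] at h
  -- differentiability of α and β
  have hαdiff : ∀ x ∈ I, DifferentiableAt ℝ α x := by
    intro x hx
    have h1 : DifferentiableAt ℝ F x := hHdiffX x hx y₀ hy₀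
    rw [hαdef]
    exact (((h1.div_const 2).exp).const_mul σ)
  have hβdiff : ∀ y ∈ J, DifferentiableAt ℝ β y := by
    intro y hy
    have h1 : DifferentiableAt ℝ G y := by
      rw [hGdef]
      exact (aux_sliceY hUo hHsmooth (Set.mk_mem_prod hx₀ hy)).sub_const _
    rw [hβdef]
    exact ((h1.div_const 2).exp)
  have hβcont : ContinuousOn β J := fun y hy =>
    ((hβdiff y hy).continuousAt).continuousWithinAt
  -- the antiderivative K
  set K : ℝ → ℝ := fun y => ∫ s in y₀..y, Real.exp (-s) * β s with hKdef
  have hintcont : ContinuousOn (fun s => Real.exp (-s) * β s) J :=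
    ((Real.continuous_exp.comp continuous_neg).continuousOn).mul hβcont
  have hKint : ∀ y ∈ J, IntervalIntegrable (fun s => Real.exp (-s) * β s)
      MeasureTheory.volume y₀ y := by
    intro y hy
    exact (hintcont.mono (hJconn.uIcc_subset hy₀ hy)).intervalIntegrable
  have hK : ∀ y ∈ J, HasDerivAt K (Real.exp (-y) * β y) y := by
    intro y hy
    exact intervalIntegral.integral_hasDerivAt_right (hKint y hy)
      (hintcont.stronglyMeasurableAtFilter hJopen y hy)
      (hintcont.continuousAt (hJopen.mem_nhds hy))
  -- integral representation
  have hrep : ∀ x ∈ I, ∀ y ∈ J,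
      Real.exp (-y) * Real.cosh (l (x, y))
        - Real.exp (-y₀) * Real.cosh (l (x, y₀)) = α x * K y := by
    intro x hx y hy
    have hsub : Set.uIcc y₀ y ⊆ J := hJconn.uIcc_subset hy₀ hy
    have hderiv : ∀ s ∈ Set.uIcc y₀ y,
        HasDerivAt (fun s => Real.exp (-s) * Real.cosh (l (x, s)))
          (α x * (Real.exp (-s) * β s)) s := by
      intro s hs
      have hs' := hsub hs
      have h1 : HasDerivAt (fun s : ℝ => Real.exp (-s)) (-Real.exp (-s)) s := by
        simpa using (hasDerivAt_id s).neg.exp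
      have h2 := huy' x hx s hs'
      have h3 := h1.mul h2
      exact h3.congr_deriv (by ring)
    have hint : IntervalIntegrable (fun s => α x * (Real.exp (-s) * β s))
        MeasureTheory.volume y₀ y := (hKint y hy).const_mul _
    have h4 := intervalIntegral.integral_eq_sub_of_hasDerivAt hderiv hint
    rw [intervalIntegral.integral_const_mul] at h4
    have h6 : (∫ s in y₀..y, Real.exp (-s) * β s) = K y := rfl
    rw [h6] at h4
    linarith [h4]
  -- the separated equation
  have hstar2 : ∀ x ∈ I, ∀ y ∈ J,
      Real.exp (-y) * (α x * β y)⁻¹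
        = Real.exp (-y₀) * (α x * β y₀)⁻¹ + (deriv α x - α x) * K y := by
    intro x hx y hy
    have heq : (fun t => Real.exp (-y) * Real.cosh (l (t, y)))
        =ᶠ[nhds x] (fun t => Real.exp (-y₀) * Real.cosh (l (t, y₀)) + α t * K y) := by
      filter_upwards [hIopen.mem_nhds hx] with t ht
      have := hrep t ht y hy
      linarith
    have hd1 : HasDerivAt (fun t => Real.exp (-y) * Real.cosh (l (t, y)))
        (Real.exp (-y) * (Real.cosh (l (x, y)) + (α x * β y)⁻¹)) x :=
      (hux' x hx y hy).const_mul _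
    have hd2 : HasDerivAt (fun t => Real.exp (-y₀) * Real.cosh (l (t, y₀)) + α t * K y)
        (Real.exp (-y₀) * (Real.cosh (l (x, y₀)) + (α x * β y₀)⁻¹) + deriv α x * K y) x :=
      ((hux' x hx y₀ hy₀).const_mul _).add ((hαdiff x hx).hasDerivAt.mul_const _)
    have hde : Real.exp (-y) * (Real.cosh (l (x, y)) + (α x * β y)⁻¹)
        = Real.exp (-y₀) * (Real.cosh (l (x, y₀)) + (α x * β y₀)⁻¹) + deriv α x * K y := by
      rw [← hd1.deriv, ← hd2.deriv]
      exact heq.deriv_eq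
    have h5 := hrep x hx y hy
    nlinarith [hde, h5]
  -- a second base point in J
  obtain ⟨ε, hε, hball⟩ := Metric.isOpen_iff.mp hJopen y₀ hy₀
  set y₁ : ℝ := y₀ + ε / 2 with hy₁def
  have hy₁ : y₁ ∈ J := by
    apply hball
    rw [Metric.mem_ball, Real.dist_eq, hy₁def]
    rw [show y₀ + ε / 2 - y₀ = ε / 2 by ring, abs_of_pos (by linarith)]
    linarith
  have hy₀₁ : y₀ < y₁ := by rw [hy₁def]; linarith
  have hKpos : 0 < K y₁ := by
    apply intervalIntegral.intervalIntegral_pos_of_pos_on (hKint y₁ hy₁) _ hy₀₁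
    intro s _
    positivity
  set μ : ℝ := (Real.exp (-y₀) * (β y₀)⁻¹ - Real.exp (-y₁) * (β y₁)⁻¹) / K y₁ with hμdef
  -- the ODE for α
  have hα'eq : ∀ x ∈ I, deriv α x = α x - μ / α x := by
    intro x hx
    have h := hstar2 x hx y₁ hy₁
    rw [hμdef]
    have hA := hαne x
    have hb0 := hβne y₀
    have hb1 := hβne y₁
    have hK := hKpos.ne'
    have key : Real.exp (-y₀) * (β y₀)⁻¹ - Real.exp (-y₁) * (β y₁)⁻¹
        = -((deriv α x - α x) * (K y₁ * α x)) := by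
      have h' : (deriv α x - α x) * K y₁
          = Real.exp (-y₁) * (α x * β y₁)⁻¹ - Real.exp (-y₀) * (α x * β y₀)⁻¹ := by
        linarith
      rw [show -((deriv α x - α x) * (K y₁ * α x))
          = -(((deriv α x - α x) * K y₁) * α x) by ring, h']
      field_simp
      ring
    rw [key]
    field_simp
    ring
  have hαd : ∀ x ∈ I, HasDerivAt α (α x - μ / α x) x := by
    intro x hx
    have := (hαdiff x hx).hasDerivAt
    rwa [hα'eq x hx] at this
  -- the relation determining β
  have hstar3 : ∀ y ∈ J, Real.exp (-y) * (β y)⁻¹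
      = Real.exp (-y₀) * (β y₀)⁻¹ - μ * K y := by
    intro y hy
    have h := hstar2 x₀ hx₀ y hy
    rw [hα'eq x₀ hx₀] at h
    have hA := hαne x₀
    have hb0 := hβne y₀
    have hb := hβne y
    have h2 : α x₀ * (Real.exp (-y) * (α x₀ * β y)⁻¹)
        = α x₀ * (Real.exp (-y₀) * (α x₀ * β y₀)⁻¹ + ((α x₀ - μ / α x₀) - α x₀) * K y) := by
      rw [h]
    calc Real.exp (-y) * (β y)⁻¹
        = α x₀ * (Real.exp (-y) * (α x₀ * β y)⁻¹) := by field_simp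
      _ = α x₀ * (Real.exp (-y₀) * (α x₀ * β y₀)⁻¹ + ((α x₀ - μ / α x₀) - α x₀) * K y) := h2
      _ = Real.exp (-y₀) * (β y₀)⁻¹ - μ * K y := by field_simp; ring
  -- the ODE for β
  have hβ'eq : ∀ y ∈ J, deriv β y = μ * β y ^ 3 - β y := by
    intro y hy
    have heq : (fun s => Real.exp (-s) * (β s)⁻¹)
        =ᶠ[nhds y] (fun s => Real.exp (-y₀) * (β y₀)⁻¹ - μ * K s) := by
      filter_upwards [hJopen.mem_nhds hy] with s hs
      exact hstar3 s hs
    have h1 : HasDerivAt (fun s : ℝ => Real.exp (-s)) (-Real.exp (-y)) y := by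
      simpa using (hasDerivAt_id y).neg.exp
    have hd1 : HasDerivAt (fun s => Real.exp (-s) * (β s)⁻¹)
        (-Real.exp (-y) * (β y)⁻¹
          + Real.exp (-y) * (-(deriv β y) / β y ^ 2)) y :=
      h1.mul ((hβdiff y hy).hasDerivAt.inv (hβne y))
    have hd2 : HasDerivAt (fun s => Real.exp (-y₀) * (β y₀)⁻¹ - μ * K s)
        (0 - μ * (Real.exp (-y) * β y)) y :=
      (hasDerivAt_const _ _).sub ((hK y hy).const_mul μ)
    have hde : -Real.exp (-y) * (β y)⁻¹ + Real.exp (-y) * (-(deriv β y) / β y ^ 2)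
        = 0 - μ * (Real.exp (-y) * β y) := by
      rw [← hd1.deriv, ← hd2.deriv]
      exact heq.deriv_eq
    have hbne := hβne y
    have hexne : Real.exp (-y) ≠ 0 := Real.exp_ne_zero _
    have h2 : (-Real.exp (-y) * (β y)⁻¹ + Real.exp (-y) * (-(deriv β y) / β y ^ 2))
          * (β y ^ 2 / Real.exp (-y))
        = (0 - μ * (Real.exp (-y) * β y)) * (β y ^ 2 / Real.exp (-y)) := by rw [hde]
    calc deriv β y
        = -((-Real.exp (-y) * (β y)⁻¹ + Real.exp (-y) * (-(deriv β y) / β y ^ 2))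
            * (β y ^ 2 / Real.exp (-y))) - β y := by field_simp; ring
      _ = -((0 - μ * (Real.exp (-y) * β y)) * (β y ^ 2 / Real.exp (-y))) - β y := by rw [h2]
      _ = μ * β y ^ 3 - β y := by field_simp; ring
  have hβd : ∀ y ∈ J, HasDerivAt β (μ * β y ^ 3 - β y) y := by
    intro y hy
    have := (hβdiff y hy).hasDerivAt
    rwa [hβ'eq y hy] at this
  -- solving the ODE for α²
  set aa : ℝ := Real.exp (-(2 * x₀)) * ((α x₀) ^ 2 - μ) with haadef
  have hαsq : ∀ x ∈ I, (α x) ^ 2 = μ + aa * Real.exp (2 * x) := by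
    have hc : ∀ z ∈ I, HasDerivAt (fun t => Real.exp (-(2 * t)) * ((α t) ^ 2 - μ)) 0 z := by
      intro z hz
      have h1 : HasDerivAt (fun t : ℝ => Real.exp (-(2 * t))) (-2 * Real.exp (-(2 * z))) z := by
        have h0 : HasDerivAt (fun t : ℝ => -(2 * t)) (-2) z := by
          exact ((hasDerivAt_id z).const_mul (2 : ℝ)).neg.congr_deriv (by norm_num)
        simpa [mul_comm] using h0.exp
      have h2 : HasDerivAt (fun t => (α t) ^ 2 - μ) (2 * α z * (α z - μ / α z)) z := by
        have := ((hαd z hz).pow 2).sub_const μ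
        exact this.congr_deriv (by norm_num)
      have h3 := h1.mul h2
      apply h3.congr_deriv
      have hAz := hαne z
      field_simp
      ring
    intro x hx
    have heq := aux_const hIc hIopen hc hx hx₀
    have e1 : Real.exp (-(2 * x)) * Real.exp (2 * x) = 1 := by
      rw [← Real.exp_add]; ring_nf; exact Real.exp_zero
    rw [← haadef] at heq
    linear_combination Real.exp (2 * x) * heq - (α x ^ 2 - μ) * e1
  -- solving the ODE for β⁻²
  set bb : ℝ := Real.exp (-(2 * y₀)) * (((β y₀)⁻¹) ^ 2 - μ) with hbbdef
  have hβsq : ∀ y ∈ J, ((β y)⁻¹) ^ 2 = μ + bb * Real.exp (2 * y) := by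
    have hc : ∀ z ∈ J, HasDerivAt (fun t => Real.exp (-(2 * t)) * (((β t)⁻¹) ^ 2 - μ)) 0 z := by
      intro z hz
      have h1 : HasDerivAt (fun t : ℝ => Real.exp (-(2 * t))) (-2 * Real.exp (-(2 * z))) z := by
        have h0 : HasDerivAt (fun t : ℝ => -(2 * t)) (-2) z := by
          exact ((hasDerivAt_id z).const_mul (2 : ℝ)).neg.congr_deriv (by norm_num)
        simpa [mul_comm] using h0.exp
      have hinv : HasDerivAt (fun t => (β t)⁻¹)
          (-(μ * β z ^ 3 - β z) / β z ^ 2) z := (hβd z hz).inv (hβne z)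
      have h2 : HasDerivAt (fun t => ((β t)⁻¹) ^ 2 - μ)
          (2 * (β z)⁻¹ * (-(μ * β z ^ 3 - β z) / β z ^ 2)) z := by
        have := (hinv.pow 2).sub_const μ
        exact this.congr_deriv (by norm_num)
      have h3 := h1.mul h2
      apply h3.congr_deriv
      have hbne := hβne z
      field_simp
      ring
    intro y hy
    have heq := aux_const hJc hJopen hc hy hy₀
    have e1 : Real.exp (-(2 * y)) * Real.exp (2 * y) = 1 := by
      rw [← Real.exp_add]; ring_nf; exact Real.exp_zero
    rw [← hbbdef] at heq
    linear_combination Real.exp (2 * y) * heq - ((β y)⁻¹ ^ 2 - μ) * e1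
  clear_value bb aa μ K β α σ Qf G F y₁
  -- the general "solve for cosh ∘ l" step
  have main : ∀ v : ℝ → ℝ → ℝ,
      (∀ x ∈ I, ∀ y ∈ J, HasDerivAt (fun t => v t y) (v x y + (α x * β y)⁻¹) x) →
      (∀ x ∈ I, ∀ y ∈ J, HasDerivAt (fun s => v x s) (v x y + α x * β y) y) →
      ∃ η : ℝ, ∀ x ∈ I, ∀ y ∈ J,
        Real.cosh (l (x, y)) = v x y + η * Real.exp (x + y) := by
    intro v hvx hvy
    refine ⟨(Real.cosh (l (x₀, y₀)) - v x₀ y₀) * Real.exp (-x₀ - y₀), ?_⟩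
    intro x hx y hy
    have hwx : ∀ x ∈ I, ∀ y ∈ J,
        HasDerivAt (fun t => Real.cosh (l (t, y)) - v t y)
          (Real.cosh (l (x, y)) - v x y) x := by
      intro x hx y hy
      exact ((hux' x hx y hy).sub (hvx x hx y hy)).congr_deriv (by ring)
    have hwy : ∀ y ∈ J,
        HasDerivAt (fun s => Real.cosh (l (x₀, s)) - v x₀ s)
          (Real.cosh (l (x₀, y)) - v x₀ y) y := by
      intro y hy
      exact ((huy' x₀ hx₀ y hy).sub (hvy x₀ hx₀ y hy)).congr_deriv (by ring)
    have := aux_final hIc hIopen hJc hJopen hx₀ hy₀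
      (w := fun x y => Real.cosh (l (x, y)) - v x y) hwx hwy hx hy
    rw [show x + y - x₀ - y₀ = (x + y) + (-x₀ - y₀) by ring, Real.exp_add] at this
    linear_combination this
  by_cases hμz : μ = 0
  · -- degenerate case: cosh l = ∓cosh(y-x-C) + η e^{x+y}
    have hαexp : ∀ x ∈ I, α x = (α x₀ * Real.exp (-x₀)) * Real.exp x := by
      have hc : ∀ z ∈ I, HasDerivAt (fun t => Real.exp (-t) * α t) 0 z := by
        intro z hz
        have h1 : HasDerivAt (fun t : ℝ => Real.exp (-t)) (-Real.exp (-z)) z := by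
          simpa using (hasDerivAt_id z).neg.exp
        apply (h1.mul (hαd z hz)).congr_deriv
        rw [hμz, zero_div]
        ring
      intro x hx
      have heq := aux_const hIc hIopen hc hx hx₀
      have h4 : α x = Real.exp x * (Real.exp (-x) * α x) := by
        rw [← mul_assoc, ← Real.exp_add]; simp
      rw [h4, heq]
      ring
    have hβexp : ∀ y ∈ J, β y = (β y₀ * Real.exp y₀) * Real.exp (-y) := by
      have hc : ∀ z ∈ J, HasDerivAt (fun t => Real.exp t * β t) 0 z := by
        intro z hz
        have h1 : HasDerivAt (fun t : ℝ => Real.exp t) (Real.exp z) z := Real.hasDerivAt_exp z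
        apply (h1.mul (hβd z hz)).congr_deriv
        rw [hμz]
        ring
      intro y hy
      have heq := aux_const hJc hJopen hc hy hy₀
      have h4 : β y = Real.exp (-y) * (Real.exp y * β y) := by
        rw [← mul_assoc, ← Real.exp_add]; simp
      rw [h4, heq]
      ring
    obtain ⟨k, hkdef⟩ : ∃ k : ℝ,
        k = (α x₀ * Real.exp (-x₀)) * (β y₀ * Real.exp y₀) := ⟨_, rfl⟩
    have hkne : k ≠ 0 := by
      rw [hkdef]
      exact mul_ne_zero (mul_ne_zero (hαne x₀) (Real.exp_ne_zero _))
        (mul_ne_zero (hβne y₀) (Real.exp_ne_zero _))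
    have hαβk : ∀ x ∈ I, ∀ y ∈ J, α x * β y = k * Real.exp (x - y) := by
      intro x hx y hy
      rw [hαexp x hx, hβexp y hy, hkdef, Real.exp_sub]
      simp only [Real.exp_neg]
      field_simp
    obtain ⟨v, hvdef⟩ : ∃ v : ℝ → ℝ → ℝ,
        v = fun x y => -(k * Real.exp (x - y) + k⁻¹ * Real.exp (y - x)) / 2 := ⟨_, rfl⟩
    have hvx : ∀ x ∈ I, ∀ y ∈ J, HasDerivAt (fun t => v t y)
        (v x y + (α x * β y)⁻¹) x := by
      intro x hx y hy
      have h1 : HasDerivAt (fun t => Real.exp (t - y)) (Real.exp (x - y)) x := by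
        simpa using ((hasDerivAt_id x).sub_const y).exp
      have h2 : HasDerivAt (fun t => Real.exp (y - t)) (-Real.exp (y - x)) x := by
        have h0 : HasDerivAt (fun t : ℝ => y - t) (-1) x := by
          exact ((hasDerivAt_const x y).sub (hasDerivAt_id x)).congr_deriv (by norm_num)
        simpa [mul_comm] using h0.exp
      have hd : HasDerivAt (fun t => v t y)
          (-(k * Real.exp (x - y) + k⁻¹ * -Real.exp (y - x)) / 2) x := by
        rw [hvdef]
        exact (((h1.const_mul k).add (h2.const_mul k⁻¹)).neg).div_const 2
      apply hd.congr_deriv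
      rw [hαβk x hx y hy]
      simp only [hvdef]
      rw [show Real.exp (y - x) = (Real.exp (x - y))⁻¹ by rw [← Real.exp_neg, neg_sub]]
      have hEne : Real.exp (x - y) ≠ 0 := Real.exp_ne_zero _
      field_simp
      ring
    have hvy : ∀ x ∈ I, ∀ y ∈ J, HasDerivAt (fun s => v x s)
        (v x y + α x * β y) y := by
      intro x hx y hy
      have h1 : HasDerivAt (fun s => Real.exp (x - s)) (-Real.exp (x - y)) y := by
        have h0 : HasDerivAt (fun s : ℝ => x - s) (-1) y := by
          exact ((hasDerivAt_const y x).sub (hasDerivAt_id y)).congr_deriv (by norm_num)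
        simpa [mul_comm] using h0.exp
      have h2 : HasDerivAt (fun s => Real.exp (s - x)) (Real.exp (y - x)) y := by
        simpa using ((hasDerivAt_id y).sub_const x).exp
      have hd : HasDerivAt (fun s => v x s)
          (-(k * -Real.exp (x - y) + k⁻¹ * Real.exp (y - x)) / 2) y := by
        rw [hvdef]
        exact (((h1.const_mul k).add (h2.const_mul k⁻¹)).neg).div_const 2
      apply hd.congr_deriv
      rw [hαβk x hx y hy]
      simp only [hvdef]
      ring
    obtain ⟨η, hfin⟩ := main v hvx hvy
    rcases lt_or_gt_of_ne hkne with hk | hk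
    · -- k < 0 : case (2)
      refine ⟨η, Or.inr (Or.inl ⟨Real.log (-k), fun x hx y hy => ?_⟩)⟩
      have hclog : Real.exp (Real.log (-k)) = -k := Real.exp_log (by linarith)
      have hv : v x y = Real.cosh (y - x - Real.log (-k)) := by
        have e1 : Real.exp (y - x - Real.log (-k)) = Real.exp (y - x) * (-k)⁻¹ := by
          rw [Real.exp_sub, hclog, div_eq_mul_inv]
        have e2 : Real.exp (-(y - x - Real.log (-k))) = Real.exp (x - y) * -k := by
          rw [show -(y - x - Real.log (-k)) = (x - y) + Real.log (-k) by ring,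
            Real.exp_add, hclog]
        rw [Real.cosh_eq, e1, e2]
        simp only [hvdef]
        have hkne' : -k ≠ 0 := neg_ne_zero.mpr hkne
        field_simp
        ring
      rw [hfin x hx y hy, hv]
    · -- k > 0 : case (1)
      refine ⟨η, Or.inl ⟨Real.log k, fun x hx y hy => ?_⟩⟩
      have hclog : Real.exp (Real.log k) = k := Real.exp_log hk
      have hv : v x y = -Real.cosh (y - x - Real.log k) := by
        have e1 : Real.exp (y - x - Real.log k) = Real.exp (y - x) * k⁻¹ := by
          rw [Real.exp_sub, hclog, div_eq_mul_inv]
        have e2 : Real.exp (-(y - x - Real.log k)) = Real.exp (x - y) * k := by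
          rw [show -(y - x - Real.log k) = (x - y) + Real.log k by ring,
            Real.exp_add, hclog]
        rw [Real.cosh_eq, e1, e2]
        simp only [hvdef]
        field_simp
        ring
      rw [hfin x hx y hy, hv]
  · -- nondegenerate case
    obtain ⟨v, hvdef⟩ : ∃ v : ℝ → ℝ → ℝ,
        v = fun x y => -(α x / μ) * (β y)⁻¹ := ⟨_, rfl⟩
    have hvne : ∀ x y : ℝ, v x y ≠ 0 := by
      intro x y
      rw [hvdef]
      exact mul_ne_zero (neg_ne_zero.mpr (div_ne_zero (hαne x) hμz))
        (inv_ne_zero (hβne y))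
    have hvx : ∀ x ∈ I, ∀ y ∈ J, HasDerivAt (fun t => v t y)
        (v x y + (α x * β y)⁻¹) x := by
      intro x hx y hy
      have hd : HasDerivAt (fun t => v t y) (-((α x - μ / α x) / μ) * (β y)⁻¹) x := by
        rw [hvdef]
        exact (((hαd x hx).div_const μ).neg).mul_const _
      apply hd.congr_deriv
      simp only [hvdef]
      have h1 := hαne x
      have h2 := hβne y
      field_simp
      ring
    have hvy : ∀ x ∈ I, ∀ y ∈ J, HasDerivAt (fun s => v x s)
        (v x y + α x * β y) y := by
      intro x hx y hy
      have hd : HasDerivAt (fun s => v x s)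
          (-(α x / μ) * (-(μ * β y ^ 3 - β y) / β y ^ 2)) y := by
        rw [hvdef]
        exact ((hβd y hy).inv (hβne y)).const_mul (-(α x / μ))
      apply hd.congr_deriv
      simp only [hvdef]
      have h1 := hαne x
      have h2 := hβne y
      field_simp
      ring
    obtain ⟨η, hfin⟩ := main v hvx hvy
    have hprod : ∀ x ∈ I, ∀ y ∈ J,
        (1 + aa / μ * Real.exp (2 * x)) * (1 + bb / μ * Real.exp (2 * y)) = v x y ^ 2 := by
      intro x hx y hy
      have h1 := hαsq x hx
      have h2 := hβsq y hy
      have hvsq : v x y ^ 2 = (α x) ^ 2 * ((β y)⁻¹) ^ 2 / μ ^ 2 := by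
        simp only [hvdef]
        ring
      rw [hvsq, h1, h2]
      field_simp
    have hpos : ∀ x ∈ I, ∀ y ∈ J,
        (1 + aa / μ * Real.exp (2 * x)) * (1 + bb / μ * Real.exp (2 * y)) > 0 := by
      intro x hx y hy
      rw [hprod x hx y hy]
      exact lt_of_le_of_ne (sq_nonneg _) (Ne.symm (pow_ne_zero 2 (hvne x y)))
    have hvsgn : ∀ x y : ℝ,
        v x y = (-(σ / μ)) * (Real.exp (F x / 2) * (Real.exp (G y / 2))⁻¹) := by
      intro x y
      simp only [hvdef, hαdef, hβdef]
      ring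
    rcases lt_or_gt_of_ne
        (show -(σ / μ) ≠ 0 from neg_ne_zero.mpr (div_ne_zero hσne hμz)) with hτ | hτ
    · -- v < 0 : case (3)
      refine ⟨η, Or.inr (Or.inr (Or.inl ⟨aa / μ, bb / μ, hpos, fun x hx y hy => ?_⟩))⟩
      have hvneg : v x y < 0 := by
        rw [hvsgn x y]
        apply mul_neg_of_neg_of_pos hτ
        positivity
      have hsq : Real.sqrt ((1 + aa / μ * Real.exp (2 * x)) * (1 + bb / μ * Real.exp (2 * y)))
          = -v x y := by
        rw [hprod x hx y hy, Real.sqrt_sq_eq_abs, abs_of_neg hvneg]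
      rw [hfin x hx y hy, hsq]
      ring
    · -- v > 0 : case (4)
      refine ⟨η, Or.inr (Or.inr (Or.inr ⟨aa / μ, bb / μ, hpos, fun x hx y hy => ?_⟩))⟩
      have hvpos : 0 < v x y := by
        rw [hvsgn x y]
        apply mul_pos hτ
        positivity
      have hsq : Real.sqrt ((1 + aa / μ * Real.exp (2 * x)) * (1 + bb / μ * Real.exp (2 * y)))
          = v x y := by
        rw [hprod x hx y hy, Real.sqrt_sq_eq_abs, abs_of_pos hvpos]
      rw [hfin x hx y hy, hsq]
end

section
/- Let v_i, v_j, v_k, c_{ij}, c_{jk}, c_{ki} ∈ ℝ³ with det(v_i, v_j, v_k) ≠ 0, where det(v_i, v_j, v_k) is the determinant of the 3×3 matrix with columns v_i, v_j, v_k, and let ⟨·,·⟩ denote the Lorentzian inner product. Then there exists a nonzero vector c ∈ ℝ³ satisfying the three equations ⟨c, ⟨c_{ij},v_i⟩·v_j − ⟨c_{ij},v_j⟩·v_i⟩ = 0, ⟨c, ⟨c_{jk},v_j⟩·v_k − ⟨c_{jk},v_k⟩·v_j⟩ = 0, and ⟨c, ⟨c_{ki},v_k⟩·v_i − ⟨c_{ki},v_i⟩·v_k⟩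 = 0 if and only if ⟨c_{ij},v_i⟩⟨c_{jk},v_j⟩⟨c_{ki},v_k⟩ = ⟨c_{ij},v_j⟩⟨c_{jk},v_k⟩⟨c_{ki},v_i⟩. -/
/-- The Lorentzian inner product on ℝ³: `⟨x,y⟩ = x₁y₁ + x₂y₂ − x₃y₃`. -/
def ldot (x y : Fin 3 → ℝ) : ℝ := x 0 * y 0 + x 1 * y 1 - x 2 * y 2

/-- There is a nonzero common solution `c` of the three linear equations coming from the
three edge perpendiculars if and only if the compatibility condition
`⟨c_{ij},v_i⟩⟨c_{jk},v_j⟩⟨c_{ki},v_k⟩ = ⟨c_{ij},v_j⟩⟨c_{jk},v_k⟩⟨c_{ki},v_i⟩` holds. -/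
theorem perpendiculars_concurrent_iff (vi vj vk cij cjk cki : Fin 3 → ℝ)
    (hdet : (Matrix.of fun r c => ![vi, vj, vk] c r).det ≠ 0) :
    (∃ c : Fin 3 → ℝ, c ≠ 0 ∧
        ldot c (ldot cij vi • vj - ldot cij vj • vi) = 0 ∧
        ldot c (ldot cjk vj • vk - ldot cjk vk • vj) = 0 ∧
        ldot c (ldot cki vk • vi - ldot cki vi • vk) = 0) ↔
      ldot cij vi * ldot cjk vj * ldot cki vk
        = ldot cij vj * ldot cjk vk * ldot cki vi := by
  set a := ldot cij vi with ha
  set b := ldot cij vj with hb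
  set p := ldot cjk vj with hp
  set q := ldot cjk vk with hq
  set r := ldot cki vk with hr
  set s := ldot cki vi with hs
  -- the matrix representing `c ↦ (ldot c vi, ldot c vj, ldot c vk)`
  set A : Matrix (Fin 3) (Fin 3) ℝ :=
    Matrix.of (fun i m => ![vi, vj, vk] i m * ![(1:ℝ), 1, -1] m) with hA
  have hdetA : A.det ≠ 0 := by
    intro h
    apply hdet
    rw [Matrix.det_fin_three] at h ⊢
    simp only [hA, Matrix.of_apply] at h ⊢
    simp [Matrix.cons_val_zero, Matrix.cons_val_one] at h ⊢
    nlinarith [h]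
  have key : ∀ c : Fin 3 → ℝ, A.mulVec c = ![ldot c vi, ldot c vj, ldot c vk] := by
    intro c
    funext i
    fin_cases i <;>
      simp [hA, Matrix.mulVec, dotProduct, Fin.sum_univ_three, ldot] <;> ring
  have expand : ∀ (c x y : Fin 3 → ℝ) (u v : ℝ),
      ldot c (u • x - v • y) = u * ldot c x - v * ldot c y := by
    intro c x y u v
    simp [ldot, Pi.sub_apply, Pi.smul_apply, smul_eq_mul]
    ring
  set M : Matrix (Fin 3) (Fin 3) ℝ := !![b, -a, 0; 0, q, -p; -r, 0, s] with hM
  have hdetM : M.det = b * q * s - a * p * r := by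
    rw [Matrix.det_fin_three]
    simp [hM]
    ring
  constructor
  · rintro ⟨c, hc0, h1, h2, h3⟩
    rw [expand] at h1 h2 h3
    set w : Fin 3 → ℝ := ![ldot c vi, ldot c vj, ldot c vk] with hw
    have hAw : A.mulVec c = w := key c
    have hw0 : w ≠ 0 := by
      intro h
      exact hdetA (Matrix.exists_mulVec_eq_zero_iff.mp ⟨c, hc0, hAw.trans h⟩)
    have hMw : M.mulVec w = 0 := by
      funext i
      fin_cases i <;>
        simp [hM, hw, Matrix.mulVec, dotProduct, Fin.sum_univ_three] <;>
        linarith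
    have := Matrix.exists_mulVec_eq_zero_iff.mp ⟨w, hw0, hMw⟩
    rw [hdetM] at this
    linarith
  · intro h
    have hMdet0 : M.det = 0 := by rw [hdetM]; linarith
    obtain ⟨w, hw0, hMw⟩ := Matrix.exists_mulVec_eq_zero_iff.mpr hMdet0
    set c : Fin 3 → ℝ := A⁻¹.mulVec w with hc
    have hAc : A.mulVec c = w := by
      rw [hc, Matrix.mulVec_mulVec, Matrix.mul_nonsing_inv _ (isUnit_iff_ne_zero.mpr hdetA),
        Matrix.one_mulVec]
    have hc0 : c ≠ 0 := by
      intro h0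
      apply hw0
      rw [← hAc, h0, Matrix.mulVec_zero]
    have e0 : ldot c vi = w 0 := by
      have := congrFun ((key c).symm.trans hAc) 0; simpa using this
    have e1 : ldot c vj = w 1 := by
      have := congrFun ((key c).symm.trans hAc) 1; simpa using this
    have e2 : ldot c vk = w 2 := by
      have := congrFun ((key c).symm.trans hAc) 2; simpa using this
    have m0 := congrFun hMw 0
    have m1 := congrFun hMw 1
    have m2 := congrFun hMw 2
    simp [hM, Matrix.mulVec, dotProduct, Fin.sum_univ_three] at m0 m1 m2
    refine ⟨c, hc0, ?_, ?_, ?_⟩ <;> rw [expand] <;> simp only [e0, e1, e2] <;> linarith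
end

section
/- Let x, y, z ∈ ℝ³ with ⟨x,x⟩ = −1 and suppose ⟨x ⊗ y, x ⊗ z⟩ = 0 (i.e., the triangle xyz has a right angle at x). Then −⟨z,y⟩ = ⟨z,x⟩·⟨x,y⟩. -/
/-- The Lorentzian cross product on ℝ³: `x ⊗ y = J (x × y)`, where `×` is the Euclidean
cross product and `J = diag(1,1,−1)`. -/
def lcross (x y : Fin 3 → ℝ) : Fin 3 → ℝ :=
  ![x 1 * y 2 - x 2 * y 1, x 2 * y 0 - x 0 * y 2, -(x 0 * y 1 - x 1 * y 0)]

/-- If a (generalized) hyperbolic triangle `xyz` has `⟨x,x⟩ = −1` and a right angle at `x`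
(i.e. `⟨x ⊗ y, x ⊗ z⟩ = 0`), then `−⟨z,y⟩ = ⟨z,x⟩⟨x,y⟩`. -/
theorem right_angle_identity (x y z : Fin 3 → ℝ) (hx : ldot x x = -1)
    (h : ldot (lcross x y) (lcross x z) = 0) :
    -ldot z y = ldot z x * ldot x y := by
  simp only [ldot, lcross] at *
  simp [Matrix.cons_val_zero, Matrix.cons_val_one] at h
  linear_combination -h - (z 0 * y 0 + z 1 * y 1 - z 2 * y 2) * hx
end

section
/- Let U ⊆ ℝ² be an open set, let d₁, d₂ : U → ℝ be twice continuously differentiable functions that vanish nowhere, set l = d₁ + d₂, and suppose ∂l/∂x(x,y) = coth(d₁(x,y)) and ∂l/∂y(x,y) = coth(d₂(x,y)) for all (x,y) ∈ U. Then for all (x,y) ∈ U, (1/sinh²(d₁(x,y)))·∂d₁/∂y(x,y) = (1/sinh²(d₂(x,y)))·∂d₂/∂x(x,y). -/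
open Filter Topology

lemma hasDerivAt_coth {t : ℝ} (ht : t ≠ 0) :
    HasDerivAt coth (-(1 / Real.sinh t ^ 2)) t := by
  have hs : Real.sinh t ≠ 0 := Real.sinh_ne_zero.2 ht
  have h : HasDerivAt coth _ t := (Real.hasDerivAt_cosh t).div (Real.hasDerivAt_sinh t) hs
  convert h using 1
  field_simp
  rw [← Real.cosh_sq_sub_sinh_sq t]
  ring

lemma deriv_coth_comp {d : ℝ → ℝ} {x : ℝ} (hd : DifferentiableAt ℝ d x) (hx : d x ≠ 0) :
    deriv (fun y => coth (d y)) x = -(1 / Real.sinh (d x) ^ 2) * deriv d x :=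
  ((hasDerivAt_coth hx).comp x hd.hasDerivAt).deriv

section Partial

variable {E : Type*} [NormedAddCommGroup E] [NormedSpace ℝ E] {f : ℝ × ℝ → E} {p : ℝ × ℝ}

lemma eventually_mem_of_mem_nhds_fst {s : Set (ℝ × ℝ)} (hs : s ∈ 𝓝 p) :
    ∀ᶠ t in 𝓝 p.1, (t, p.2) ∈ s :=
  (continuous_id.prodMk continuous_const).continuousAt.preimage_mem_nhds hs

lemma eventually_mem_of_mem_nhds_snd {s : Set (ℝ × ℝ)} (hs : s ∈ 𝓝 p) :
    ∀ᶠ y in 𝓝 p.2, (p.1, y) ∈ s :=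
  (continuous_const.prodMk continuous_id).continuousAt.preimage_mem_nhds hs

lemma HasFDerivAt.hasDerivAt_fst {f' : ℝ × ℝ →L[ℝ] E} (hf : HasFDerivAt f f' p) :
    HasDerivAt (fun t => f (t, p.2)) (f' (1, 0)) p.1 :=
  hf.comp_hasDerivAt p.1 ((hasDerivAt_id _).prodMk (hasDerivAt_const _ _))

lemma HasFDerivAt.hasDerivAt_snd {f' : ℝ × ℝ →L[ℝ] E} (hf : HasFDerivAt f f' p) :
    HasDerivAt (fun y => f (p.1, y)) (f' (0, 1)) p.2 :=
  hf.comp_hasDerivAt p.2 ((hasDerivAt_const _ _).prodMk (hasDerivAt_id _))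

lemma ContDiffAt.hasFDerivAt_fderiv_apply (hf : ContDiffAt ℝ 2 f p) (v : ℝ × ℝ) :
    HasFDerivAt (fun q => fderiv ℝ f q v)
      ((ContinuousLinearMap.apply ℝ E v).comp (fderiv ℝ (fderiv ℝ f) p)) p :=
  (ContinuousLinearMap.apply ℝ E v).hasFDerivAt.comp p
    ((hf.fderiv_right (m := 1) le_rfl).differentiableAt one_ne_zero).hasFDerivAt

lemma ContDiffAt.eventually_differentiableAt (hf : ContDiffAt ℝ 2 f p) :
    ∀ᶠ q in 𝓝 p, DifferentiableAt ℝ f q :=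
  (hf.eventually (by simp)).mono fun _ hq => hq.differentiableAt two_ne_zero

lemma ContDiffAt.deriv_snd_deriv_fst_eq (hf : ContDiffAt ℝ 2 f p) :
    deriv (fun y => deriv (fun t => f (t, y)) p.1) p.2 = fderiv ℝ (fderiv ℝ f) p (0, 1) (1, 0) := by
  have hline : (fun y => deriv (fun t => f (t, y)) p.1) =ᶠ[𝓝 p.2]
      fun y => fderiv ℝ f (p.1, y) (1, 0) :=
    (eventually_mem_of_mem_nhds_snd hf.eventually_differentiableAt).mono fun y hy =>
      hy.hasFDerivAt.hasDerivAt_fst.deriv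
  rw [hline.deriv_eq]
  exact (hf.hasFDerivAt_fderiv_apply (1, 0)).hasDerivAt_snd.deriv

lemma ContDiffAt.deriv_fst_deriv_snd_eq (hf : ContDiffAt ℝ 2 f p) :
    deriv (fun t => deriv (fun y => f (t, y)) p.2) p.1 = fderiv ℝ (fderiv ℝ f) p (1, 0) (0, 1) := by
  have hline : (fun t => deriv (fun y => f (t, y)) p.2) =ᶠ[𝓝 p.1]
      fun t => fderiv ℝ f (t, p.2) (0, 1) :=
    (eventually_mem_of_mem_nhds_fst hf.eventually_differentiableAt).mono fun t ht =>
      ht.hasFDerivAt.hasDerivAt_snd.deriv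
  rw [hline.deriv_eq]
  exact (hf.hasFDerivAt_fderiv_apply (0, 1)).hasDerivAt_fst.deriv

theorem ContDiffAt.deriv_snd_deriv_fst_comm (hf : ContDiffAt ℝ 2 f p) :
    deriv (fun y => deriv (fun t => f (t, y)) p.1) p.2 =
      deriv (fun t => deriv (fun y => f (t, y)) p.2) p.1 := by
  rw [hf.deriv_snd_deriv_fst_eq, hf.deriv_fst_deriv_snd_eq, hf.isSymmSndFDerivAt (by simp)]

end Partial

lemma deriv_snd_deriv_fst_of_eq_coth {l d : ℝ × ℝ → ℝ} {U : Set (ℝ × ℝ)} {p : ℝ × ℝ}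
    (hU : U ∈ 𝓝 p) (hd : DifferentiableAt ℝ d p) (hdp : d p ≠ 0)
    (hl : ∀ q ∈ U, deriv (fun t => l (t, q.2)) q.1 = coth (d q)) :
    deriv (fun y => deriv (fun t => l (t, y)) p.1) p.2 =
      -(1 / Real.sinh (d p) ^ 2) * deriv (fun y => d (p.1, y)) p.2 := by
  have hline : (fun y => deriv (fun t => l (t, y)) p.1) =ᶠ[𝓝 p.2] fun y => coth (d (p.1, y)) :=
    (eventually_mem_of_mem_nhds_snd hU).mono fun y hy => hl _ hy
  rw [hline.deriv_eq]
  exact deriv_coth_comp hd.hasFDerivAt.hasDerivAt_snd.differentiableAt hdp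

lemma deriv_fst_deriv_snd_of_eq_coth {l d : ℝ × ℝ → ℝ} {U : Set (ℝ × ℝ)} {p : ℝ × ℝ}
    (hU : U ∈ 𝓝 p) (hd : DifferentiableAt ℝ d p) (hdp : d p ≠ 0)
    (hl : ∀ q ∈ U, deriv (fun y => l (q.1, y)) q.2 = coth (d q)) :
    deriv (fun t => deriv (fun y => l (t, y)) p.2) p.1 =
      -(1 / Real.sinh (d p) ^ 2) * deriv (fun t => d (t, p.2)) p.1 := by
  have hline : (fun t => deriv (fun y => l (t, y)) p.2) =ᶠ[𝓝 p.1] fun t => coth (d (t, p.2)) :=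
    (eventually_mem_of_mem_nhds_fst hU).mono fun t ht => hl _ ht
  rw [hline.deriv_eq]
  exact deriv_coth_comp hd.hasFDerivAt.hasDerivAt_fst.differentiableAt hdp

/-- For a discrete conformal structure on an edge, the symmetry of mixed second partials of
`l = d₁ + d₂` yields `(1/sinh² d₁) ∂d₁/∂y = (1/sinh² d₂) ∂d₂/∂x`. -/
theorem mixed_partial_symmetry (U : Set (ℝ × ℝ)) (hU : IsOpen U)
    (d₁ d₂ : ℝ × ℝ → ℝ)
    (hd₁C2 : ContDiffOn ℝ 2 d₁ U) (hd₂C2 : ContDiffOn ℝ 2 d₂ U)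
    (hd₁ne : ∀ p ∈ U, d₁ p ≠ 0) (hd₂ne : ∀ p ∈ U, d₂ p ≠ 0)
    (l : ℝ × ℝ → ℝ) (hl : l = d₁ + d₂)
    (hlx : ∀ p ∈ U, deriv (fun t => l (t, p.2)) p.1 = coth (d₁ p))
    (hly : ∀ p ∈ U, deriv (fun s => l (p.1, s)) p.2 = coth (d₂ p)) :
    ∀ p ∈ U,
      (1 / Real.sinh (d₁ p) ^ 2) * deriv (fun s => d₁ (p.1, s)) p.2 =
        (1 / Real.sinh (d₂ p) ^ 2) * deriv (fun t => d₂ (t, p.2)) p.1 := by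
  intro p hp
  have hpU : U ∈ 𝓝 p := hU.mem_nhds hp
  have hlC2 : ContDiffAt ℝ 2 l p := hl ▸ (hd₁C2.add hd₂C2).contDiffAt hpU
  have hd₁ := (hd₁C2.contDiffAt hpU).differentiableAt two_ne_zero
  have hd₂ := (hd₂C2.contDiffAt hpU).differentiableAt two_ne_zero
  have hmixed := hlC2.deriv_snd_deriv_fst_comm
  rw [deriv_snd_deriv_fst_of_eq_coth hpU hd₁ (hd₁ne p hp) hlx,
    deriv_fst_deriv_snd_of_eq_coth hpU hd₂ (hd₂ne p hp) hly] at hmixed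
  linarith
end

section
/- Let U ⊆ ℝ² be an open set, let d₁, d₂ : U → ℝ be twice continuously differentiable functions that vanish nowhere, set l = d₁ + d₂, and suppose ∂l/∂x(x,y) = coth(d₁(x,y)) and ∂l/∂y(x,y) = coth(d₂(x,y)) for all (x,y) ∈ U. Define H : U → ℝ by H(x,y) = log(sinh²(d₁(x,y))/sinh²(d₂(x,y))). Then for all (x,y) ∈ U, e^{H}·∂H/∂x + ∂H/∂y = 2(e^{H} − 1) and ∂H/∂x + e^{−H}·∂H/∂y = 2(1 − e^{−H}). -/
open Filter Topology

lemma coth_sq {t : ℝ} (ht : t ≠ 0) : coth t ^ 2 = 1 + 1 / Real.sinh t ^ 2 := by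
  have hs : Real.sinh t ≠ 0 := Real.sinh_ne_zero.2 ht
  rw [coth, div_pow, Real.cosh_sq']
  field_simp
  ring

lemma hasDerivAt_log_sinh_sq {t : ℝ} (ht : t ≠ 0) :
    HasDerivAt (fun t => Real.log (Real.sinh t ^ 2)) (2 * coth t) t := by
  have hs : Real.sinh t ≠ 0 := Real.sinh_ne_zero.2 ht
  refine (((Real.hasDerivAt_sinh t).pow 2).log (pow_ne_zero 2 hs)).congr_deriv ?_
  rw [coth, Pi.pow_apply]
  field_simp
  norm_num
  ring

section Partial

variable {F : Type*} [NormedAddCommGroup F] [NormedSpace ℝ F]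
  {f : ℝ × ℝ → F} {f' : ℝ × ℝ →L[ℝ] F} {q : ℝ × ℝ}

lemma HasFDerivAt.hasDerivAt_fst_slice (hf : HasFDerivAt f f' q) :
    HasDerivAt (fun t => f (t, q.2)) (f' (1, 0)) q.1 :=
  hf.comp_hasDerivAt q.1 ((hasDerivAt_id q.1).prodMk (hasDerivAt_const q.1 q.2))

lemma HasFDerivAt.hasDerivAt_snd_slice (hf : HasFDerivAt f f' q) :
    HasDerivAt (fun s => f (q.1, s)) (f' (0, 1)) q.2 :=
  hf.comp_hasDerivAt q.2 ((hasDerivAt_const q.2 q.1).prodMk (hasDerivAt_id q.2))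

end Partial

section Symmetry

variable {E F : Type*} [NormedAddCommGroup E] [NormedSpace ℝ E]
  [NormedAddCommGroup F] [NormedSpace ℝ F] {f : E → F} {p : E}

lemma ContDiffAt.fderiv_fderiv_apply_comm (hf : ContDiffAt ℝ 2 f p) (v w : E) :
    fderiv ℝ (fun q => fderiv ℝ f q v) p w = fderiv ℝ (fun q => fderiv ℝ f q w) p v := by
  have hDf : DifferentiableAt ℝ (fderiv ℝ f) p :=
    (hf.fderiv_right (m := 1) (by norm_num)).differentiableAt one_ne_zero
  rw [fderiv_clm_apply hDf (differentiableAt_const v),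
    fderiv_clm_apply hDf (differentiableAt_const w)]
  simpa using (hf.isSymmSndFDerivAt (by simp)).eq w v

lemma ContDiffAt.fderiv_apply_comm_of_eventuallyEq {g₁ g₂ : E → F} (hf : ContDiffAt ℝ 2 f p)
    {v w : E} (h₁ : (fun q => fderiv ℝ f q v) =ᶠ[𝓝 p] g₁)
    (h₂ : (fun q => fderiv ℝ f q w) =ᶠ[𝓝 p] g₂) :
    fderiv ℝ g₁ p w = fderiv ℝ g₂ p v := by
  rw [← h₁.fderiv_eq, ← h₂.fderiv_eq, hf.fderiv_fderiv_apply_comm]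

end Symmetry

lemma sinh_sq_div_mul_add_eq_of_coth {a b A₁ B₁ A₂ B₂ : ℝ} (ha : a ≠ 0) (hb : b ≠ 0)
    (hA : A₁ + A₂ = coth a) (hB : B₁ + B₂ = coth b)
    (hsymm : B₁ / Real.sinh a ^ 2 = A₂ / Real.sinh b ^ 2) :
    Real.sinh a ^ 2 / Real.sinh b ^ 2 * (2 * coth a * A₁ - 2 * coth b * A₂)
      + (2 * coth a * B₁ - 2 * coth b * B₂)
      = 2 * (Real.sinh a ^ 2 / Real.sinh b ^ 2 - 1) := by
  have hsa : Real.sinh a ≠ 0 := Real.sinh_ne_zero.2 ha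
  have hsb : Real.sinh b ≠ 0 := Real.sinh_ne_zero.2 hb
  have hB₁ : B₁ = Real.sinh a ^ 2 / Real.sinh b ^ 2 * A₂ := by
    field_simp at hsymm ⊢; linarith
  have hB₂ : B₂ = coth b - B₁ := by linarith
  have key : Real.sinh a ^ 2 / Real.sinh b ^ 2 * coth a ^ 2 - Real.sinh a ^ 2 / Real.sinh b ^ 2
      = coth b ^ 2 - 1 := by
    rw [coth_sq ha, coth_sq hb]
    field_simp
    ring
  rw [hB₂, hB₁]
  linear_combination (2 * (Real.sinh a ^ 2 / Real.sinh b ^ 2) * coth a) * hA + 2 * key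

section EdgeCalculus

variable {E : Type*} [NormedAddCommGroup E] [NormedSpace ℝ E]
  {d₁ d₂ : E → ℝ} {d₁' d₂' : E →L[ℝ] ℝ} {p : E}

lemma hasFDerivAt_log_sinh_sq_div_sinh_sq (h₁ : HasFDerivAt d₁ d₁' p) (h₂ : HasFDerivAt d₂ d₂' p)
    (hp₁ : d₁ p ≠ 0) (hp₂ : d₂ p ≠ 0) :
    HasFDerivAt (fun q => Real.log (Real.sinh (d₁ q) ^ 2 / Real.sinh (d₂ q) ^ 2))
      ((2 * coth (d₁ p)) • d₁' - (2 * coth (d₂ p)) • d₂') p := by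
  have hsplit : (fun q => Real.log (Real.sinh (d₁ q) ^ 2) - Real.log (Real.sinh (d₂ q) ^ 2))
      =ᶠ[𝓝 p] fun q => Real.log (Real.sinh (d₁ q) ^ 2 / Real.sinh (d₂ q) ^ 2) := by
    filter_upwards [h₁.continuousAt.eventually_ne hp₁, h₂.continuousAt.eventually_ne hp₂]
      with q hq₁ hq₂
    rw [Real.log_div (pow_ne_zero 2 (Real.sinh_ne_zero.2 hq₁))
      (pow_ne_zero 2 (Real.sinh_ne_zero.2 hq₂))]
  exact (((hasDerivAt_log_sinh_sq hp₁).comp_hasFDerivAt p h₁).sub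
    ((hasDerivAt_log_sinh_sq hp₂).comp_hasFDerivAt p h₂)).congr_of_eventuallyEq hsplit.symm

lemma div_sinh_sq_eq_of_fderiv_eq_coth {l : E → ℝ} (hl : ContDiffAt ℝ 2 l p) {v w : E}
    (hlv : ∀ᶠ q in 𝓝 p, fderiv ℝ l q v = coth (d₁ q))
    (hlw : ∀ᶠ q in 𝓝 p, fderiv ℝ l q w = coth (d₂ q))
    (h₁ : HasFDerivAt d₁ d₁' p) (h₂ : HasFDerivAt d₂ d₂' p) (hp₁ : d₁ p ≠ 0) (hp₂ : d₂ p ≠ 0) :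
    d₁' w / Real.sinh (d₁ p) ^ 2 = d₂' v / Real.sinh (d₂ p) ^ 2 := by
  have hc₁ : HasFDerivAt (fun q => coth (d₁ q)) ((-(1 / Real.sinh (d₁ p) ^ 2)) • d₁') p :=
    (hasDerivAt_coth hp₁).comp_hasFDerivAt p h₁
  have hc₂ : HasFDerivAt (fun q => coth (d₂ q)) ((-(1 / Real.sinh (d₂ p) ^ 2)) • d₂') p :=
    (hasDerivAt_coth hp₂).comp_hasFDerivAt p h₂
  have h := hl.fderiv_apply_comm_of_eventuallyEq hlv hlw
  rw [hc₁.fderiv, hc₂.fderiv] at h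
  simpa [div_eq_inv_mul] using h

end EdgeCalculus

lemma add_exp_neg_mul_eq {h x y : ℝ} (hxy : Real.exp h * x + y = 2 * (Real.exp h - 1)) :
    x + Real.exp (-h) * y = 2 * (1 - Real.exp (-h)) := by
  rw [Real.exp_neg]
  field_simp
  linarith

theorem exp_mul_deriv_fst_add_deriv_snd_of_fderiv_eq_coth {d₁ d₂ : ℝ × ℝ → ℝ} {p : ℝ × ℝ}
    (hd₁ : ContDiffAt ℝ 2 d₁ p) (hd₂ : ContDiffAt ℝ 2 d₂ p) (hp₁ : d₁ p ≠ 0) (hp₂ : d₂ p ≠ 0)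
    (hlx : ∀ᶠ q in 𝓝 p, fderiv ℝ (d₁ + d₂) q (1, 0) = coth (d₁ q))
    (hly : ∀ᶠ q in 𝓝 p, fderiv ℝ (d₁ + d₂) q (0, 1) = coth (d₂ q)) {H : ℝ × ℝ → ℝ}
    (hH : H = fun q => Real.log (Real.sinh (d₁ q) ^ 2 / Real.sinh (d₂ q) ^ 2)) :
    Real.exp (H p) * deriv (fun t => H (t, p.2)) p.1 + deriv (fun s => H (p.1, s)) p.2
      = 2 * (Real.exp (H p) - 1) := by
  have hdiff₁ := hd₁.differentiableAt two_ne_zero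
  have hdiff₂ := hd₂.differentiableAt two_ne_zero
  have hsymm := div_sinh_sq_eq_of_fderiv_eq_coth (hd₁.add hd₂) hlx hly
    hdiff₁.hasFDerivAt hdiff₂.hasFDerivAt hp₁ hp₂
  have hsum_x := hlx.self_of_nhds
  have hsum_y := hly.self_of_nhds
  rw [fderiv_add hdiff₁ hdiff₂] at hsum_x hsum_y
  have hHd : HasFDerivAt H
      ((2 * coth (d₁ p)) • fderiv ℝ d₁ p - (2 * coth (d₂ p)) • fderiv ℝ d₂ p) p :=
    hH ▸ hasFDerivAt_log_sinh_sq_div_sinh_sq hdiff₁.hasFDerivAt hdiff₂.hasFDerivAt hp₁ hp₂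
  have hexp : Real.exp (H p) = Real.sinh (d₁ p) ^ 2 / Real.sinh (d₂ p) ^ 2 := by
    have := Real.sinh_ne_zero.2 hp₁
    have := Real.sinh_ne_zero.2 hp₂
    rw [hH, Real.exp_log (by positivity)]
  rw [hHd.hasDerivAt_fst_slice.deriv, hHd.hasDerivAt_snd_slice.deriv, hexp]
  simpa using sinh_sq_div_mul_add_eq_of_coth hp₁ hp₂ hsum_x hsum_y hsymm

/-- For a discrete conformal structure on an edge, the function
`H = log(sinh² d₁ / sinh² d₂)` satisfies
`e^H ∂H/∂x + ∂H/∂y = 2(e^H − 1)` and `∂H/∂x + e^{−H} ∂H/∂y = 2(1 − e^{−H})`. -/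
theorem H_first_order_equations (U : Set (ℝ × ℝ)) (hU : IsOpen U)
    (d₁ d₂ : ℝ × ℝ → ℝ)
    (hd₁C2 : ContDiffOn ℝ 2 d₁ U) (hd₂C2 : ContDiffOn ℝ 2 d₂ U)
    (hd₁ne : ∀ p ∈ U, d₁ p ≠ 0) (hd₂ne : ∀ p ∈ U, d₂ p ≠ 0)
    (l : ℝ × ℝ → ℝ) (hl : l = d₁ + d₂)
    (hlx : ∀ p ∈ U, deriv (fun t => l (t, p.2)) p.1 = coth (d₁ p))
    (hly : ∀ p ∈ U, deriv (fun s => l (p.1, s)) p.2 = coth (d₂ p))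
    (H : ℝ × ℝ → ℝ)
    (hH : H = fun p => Real.log (Real.sinh (d₁ p) ^ 2 / Real.sinh (d₂ p) ^ 2)) :
    ∀ p ∈ U,
      (Real.exp (H p) * deriv (fun t => H (t, p.2)) p.1
          + deriv (fun s => H (p.1, s)) p.2 = 2 * (Real.exp (H p) - 1)) ∧
      (deriv (fun t => H (t, p.2)) p.1
          + Real.exp (-H p) * deriv (fun s => H (p.1, s)) p.2
        = 2 * (1 - Real.exp (-H p))) := by
  subst hl
  intro p hp
  have hd : ∀ q ∈ U, ContDiffAt ℝ 2 d₁ q ∧ ContDiffAt ℝ 2 d₂ q := fun q hq =>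
    ⟨hd₁C2.contDiffAt (hU.mem_nhds hq), hd₂C2.contDiffAt (hU.mem_nhds hq)⟩
  have hl : ∀ q ∈ U, HasFDerivAt (d₁ + d₂) (fderiv ℝ (d₁ + d₂) q) q := fun q hq =>
    (((hd q hq).1.add (hd q hq).2).differentiableAt two_ne_zero).hasFDerivAt
  have hlx' : ∀ᶠ q in 𝓝 p, fderiv ℝ (d₁ + d₂) q (1, 0) = coth (d₁ q) := by
    filter_upwards [hU.mem_nhds hp] with q hq
    rw [← hlx q hq, (hl q hq).hasDerivAt_fst_slice.deriv]
  have hly' : ∀ᶠ q in 𝓝 p, fderiv ℝ (d₁ + d₂) q (0, 1) = coth (d₂ q) := by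
    filter_upwards [hU.mem_nhds hp] with q hq
    rw [← hly q hq, (hl q hq).hasDerivAt_snd_slice.deriv]
  have first := exp_mul_deriv_fst_add_deriv_snd_of_fderiv_eq_coth (hd p hp).1 (hd p hp).2
    (hd₁ne p hp) (hd₂ne p hp) hlx' hly' hH
  exact ⟨first, add_exp_neg_mul_eq first⟩
end

section
/- Let c₃ > 0 and c₄ = 1/c₃, and let w : ℝ² → ℝ be differentiable with ∂w/∂x(x,y) = w(x,y) + c₄·e^{y−x} and ∂w/∂y(x,y) = w(x,y) + c₃·e^{x−y} for all (x,y) ∈ ℝ². Then there exists a constant η ∈ ℝ such that w(x,y) = −cosh(y − x − log c₃) + η·e^{x+y} for all (x,y) ∈ ℝ². -/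
/-!
Adding `cosh (y − x − log c₃)` absorbs both inhomogeneous terms: since
`cosh s ± sinh s = e^{±s}`, the function `u = w + cosh (y − x − log c₃)` satisfies
`∂u/∂x = u` and `∂u/∂y = u`. Integrating the two homogeneous equations along the
axes gives `u (x, y) = u (0, 0) e^{x+y}`.
-/

open Real

lemma eq_mul_exp_of_hasDerivAt_self {f : ℝ → ℝ} (hf : ∀ t, HasDerivAt f (f t) t) (t : ℝ) :
    f t = f 0 * exp t := by
  have hconst : ∀ s, HasDerivAt (fun s => f s * exp (-s)) 0 s := fun s => by
    refine ((hf s).mul (hasDerivAt_neg s).exp).congr_deriv ?_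
    ring
  have heq := is_const_of_deriv_eq_zero (fun s => (hconst s).differentiableAt)
    (fun s => (hconst s).deriv) t 0
  simp only [neg_zero, exp_zero, mul_one] at heq
  rw [← heq, mul_assoc, ← exp_add, neg_add_cancel, exp_zero, mul_one]

lemma eq_mul_exp_add_of_hasDerivAt_partials {u : ℝ × ℝ → ℝ}
    (hux : ∀ x y, HasDerivAt (fun t => u (t, y)) (u (x, y)) x)
    (huy : ∀ x y, HasDerivAt (fun s => u (x, s)) (u (x, y)) y) (x y : ℝ) :
    u (x, y) = u (0, 0) * exp (x + y) := by
  rw [eq_mul_exp_of_hasDerivAt_self (hux · y) x,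
    eq_mul_exp_of_hasDerivAt_self (huy 0 ·) y, exp_add]
  ring

lemma cosh_sub_log_add_sinh_sub_log {c : ℝ} (hc : 0 < c) (s : ℝ) :
    cosh (s - log c) + sinh (s - log c) = 1 / c * exp s := by
  rw [cosh_add_sinh, exp_sub, exp_log hc]
  ring

lemma cosh_sub_log_sub_sinh_sub_log {c : ℝ} (hc : 0 < c) (s : ℝ) :
    cosh (s - log c) - sinh (s - log c) = c * exp (-s) := by
  rw [cosh_sub_sinh, neg_sub, sub_eq_add_neg, exp_add, exp_log hc]

/-- Solving the linear first-order system `∂w/∂x = w + c₄ e^{y−x}`, `∂w/∂y = w + c₃ e^{x−y}`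
with `c₄ = 1/c₃`: `w(x,y) = −cosh(y − x − log c₃) + η e^{x+y}` for some constant `η`. -/
theorem linear_system_cosh_neg (c₃ c₄ : ℝ) (hc₃ : 0 < c₃) (hc₄ : c₄ = 1 / c₃)
    (w : ℝ × ℝ → ℝ) (hdiff : Differentiable ℝ w)
    (hx : ∀ x y : ℝ, deriv (fun t => w (t, y)) x = w (x, y) + c₄ * Real.exp (y - x))
    (hy : ∀ x y : ℝ, deriv (fun s => w (x, s)) y = w (x, y) + c₃ * Real.exp (x - y)) :
    ∃ η : ℝ, ∀ x y : ℝ,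
      w (x, y) = -Real.cosh (y - x - Real.log c₃) + η * Real.exp (x + y) := by
  set u : ℝ × ℝ → ℝ := fun p => w p + cosh (p.2 - p.1 - log c₃)
  have hux : ∀ x y, HasDerivAt (fun t => u (t, y)) (u (x, y)) x := fun x y => by
    have hw : HasDerivAt (fun t => w (t, y)) (w (x, y) + c₄ * exp (y - x)) x :=
      hx x y ▸ (by fun_prop : DifferentiableAt ℝ (fun t => w (t, y)) x).hasDerivAt
    have hcosh := (((hasDerivAt_id' x).const_sub y).sub_const (log c₃)).cosh
    refine (hw.add hcosh).congr_deriv ?_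
    rw [hc₄, ← cosh_sub_log_add_sinh_sub_log hc₃]
    simp only [u]
    ring
  have huy : ∀ x y, HasDerivAt (fun s => u (x, s)) (u (x, y)) y := fun x y => by
    have hw : HasDerivAt (fun s => w (x, s)) (w (x, y) + c₃ * exp (x - y)) y :=
      hy x y ▸ (by fun_prop : DifferentiableAt ℝ (fun s => w (x, s)) y).hasDerivAt
    have hcosh := (((hasDerivAt_id' y).sub_const x).sub_const (log c₃)).cosh
    refine (hw.add hcosh).congr_deriv ?_
    rw [show x - y = -(y - x) by ring, ← cosh_sub_log_sub_sinh_sub_log hc₃]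
    simp only [u]
    ring
  refine ⟨u (0, 0), fun x y => ?_⟩
  linarith [eq_mul_exp_add_of_hasDerivAt_partials hux huy x y]
end

section
/- Let a, b ∈ ℝ and let I, J ⊆ ℝ be open intervals such that 1 + a·e^{2x} > 0 for all x ∈ I and 1 + b·e^{2y} > 0 for all y ∈ J. Let w : I × J → ℝ be differentiable with ∂w/∂x = w + √((1 + b·e^{2y})/(1 + a·e^{2x})) and ∂w/∂y = w + √((1 + a·e^{2x})/(1 + b·e^{2y})) at every (x,y) ∈ I × J. Then there exists a constant η ∈ ℝ such that w(x,y) = −√((1 + a·e^{2x})(1 + b·e^{2y})) + η·e^{x+y} for all (x,y) ∈ I × J. -/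
/-!
With `A = 1 + a e^{2x}` and `B = 1 + b e^{2y}`, one has `(√A)' = √A - 1/√A` because
`(√A)² - 1 = a e^{2x}`. Hence `G = w + √A √B` satisfies `∂G/∂x = G` and `∂G/∂y = G`: the
inhomogeneous terms `√B/√A` and `√A/√B` of the system are cancelled exactly. So `G e^{-(x+y)}`
has vanishing partial derivatives and is constant on the rectangle `I × J`.
-/

open Real

lemma hasDerivAt_sqrt_one_add_mul_exp {c x : ℝ} (h : 0 < 1 + c * exp (2 * x)) :
    HasDerivAt (fun t => √(1 + c * exp (2 * t)))
      (√(1 + c * exp (2 * x)) - (√(1 + c * exp (2 * x)))⁻¹) x := by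
  have hinner : HasDerivAt (fun t => 1 + c * exp (2 * t)) (c * (exp (2 * x) * 2)) x := by
    simpa using (((hasDerivAt_id x).const_mul 2).exp.const_mul c).const_add 1
  refine ((hasDerivAt_sqrt h.ne').comp x hinner).congr_deriv ?_
  have hsq : √(1 + c * exp (2 * x)) ^ 2 = 1 + c * exp (2 * x) := sq_sqrt h.le
  field_simp
  linear_combination (-1) * hsq

lemma HasDerivAt.add_mul_const_of_sub_inv {f φ : ℝ → ℝ} {x k : ℝ}
    (hf : HasDerivAt f (f x + k / φ x) x) (hφ : HasDerivAt φ (φ x - (φ x)⁻¹) x) :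
    HasDerivAt (fun t => f t + φ t * k) (f x + φ x * k) x :=
  (hf.add (hφ.mul_const k)).congr_deriv (by ring)

lemma Set.OrdConnected.eq_mul_exp_sub_of_hasDerivAt_self {s : Set ℝ} (hs : s.OrdConnected)
    {F : ℝ → ℝ} (hF : ∀ t ∈ s, HasDerivAt F (F t) t) {u v : ℝ} (hu : u ∈ s) (hv : v ∈ s) :
    F v = F u * exp (v - u) := by
  have hderiv : ∀ t ∈ s, HasDerivWithinAt (fun t => F t * exp (-t)) 0 s t := fun t ht => by
    refine (((hF t ht).mul (hasDerivAt_neg t).exp).hasDerivWithinAt).congr_deriv ?_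
    ring
  have hconst : F v * exp (-v) = F u * exp (-u) := by
    simpa [sub_eq_zero] using
      hs.convex.norm_image_sub_le_of_norm_hasDerivWithin_le hderiv (fun _ _ => norm_zero.le) hu hv
  calc F v = F v * exp (-v) * exp v := by
        rw [mul_assoc, ← exp_add, neg_add_cancel, exp_zero, mul_one]
    _ = F u * exp (v - u) := by rw [hconst, mul_assoc, ← exp_add, neg_add_eq_sub]

lemma Set.OrdConnected.exists_eq_mul_exp_add_of_hasDerivAt_partial_self {I J : Set ℝ}
    (hI : I.OrdConnected) (hJ : J.OrdConnected) {G : ℝ × ℝ → ℝ}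
    (hGx : ∀ x ∈ I, ∀ y ∈ J, HasDerivAt (fun t => G (t, y)) (G (x, y)) x)
    (hGy : ∀ x ∈ I, ∀ y ∈ J, HasDerivAt (fun s => G (x, s)) (G (x, y)) y) :
    ∃ η : ℝ, ∀ x ∈ I, ∀ y ∈ J, G (x, y) = η * exp (x + y) := by
  rcases (I ×ˢ J).eq_empty_or_nonempty with hempty | ⟨⟨x₀, y₀⟩, hx₀, hy₀⟩
  · exact ⟨0, fun x hx y hy => (hempty.subset (Set.mk_mem_prod hx hy)).elim⟩
  refine ⟨G (x₀, y₀) * exp (-(x₀ + y₀)), fun x hx y hy => ?_⟩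
  rw [hI.eq_mul_exp_sub_of_hasDerivAt_self (hGx · · y hy) hx₀ hx,
    hJ.eq_mul_exp_sub_of_hasDerivAt_self (hGy x₀ hx₀) hy₀ hy, mul_assoc, mul_assoc,
    ← exp_add, ← exp_add]
  ring_nf

theorem linear_system_sqrt_neg_general (a b : ℝ) (I J : Set ℝ)
    (hIconn : I.OrdConnected)
    (hJconn : J.OrdConnected)
    (ha : ∀ x ∈ I, 0 < 1 + a * Real.exp (2 * x))
    (hb : ∀ y ∈ J, 0 < 1 + b * Real.exp (2 * y))
    (w : ℝ × ℝ → ℝ)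
    (hdiff : ∀ p ∈ I ×ˢ J, DifferentiableAt ℝ w p)
    (hx : ∀ x ∈ I, ∀ y ∈ J, deriv (fun t => w (t, y)) x =
      w (x, y) + Real.sqrt ((1 + b * Real.exp (2 * y)) / (1 + a * Real.exp (2 * x))))
    (hy : ∀ x ∈ I, ∀ y ∈ J, deriv (fun s => w (x, s)) y =
      w (x, y) + Real.sqrt ((1 + a * Real.exp (2 * x)) / (1 + b * Real.exp (2 * y)))) :
    ∃ η : ℝ, ∀ x ∈ I, ∀ y ∈ J,
      w (x, y) = -Real.sqrt ((1 + a * Real.exp (2 * x)) * (1 + b * Real.exp (2 * y)))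
        + η * Real.exp (x + y) := by
  set G : ℝ × ℝ → ℝ := fun p => w p + √(1 + a * exp (2 * p.1)) * √(1 + b * exp (2 * p.2))
  have hGx : ∀ x ∈ I, ∀ y ∈ J, HasDerivAt (fun t => G (t, y)) (G (x, y)) x := by
    intro x hxI y hyJ
    have hw : HasDerivAt (fun t => w (t, y)) _ x :=
      ((hdiff _ ⟨hxI, hyJ⟩).comp x (hasFDerivAt_prodMk_left x y).differentiableAt).hasDerivAt
    rw [Function.comp_def, hx x hxI y hyJ, sqrt_div' _ (ha x hxI).le] at hw
    exact hw.add_mul_const_of_sub_inv (hasDerivAt_sqrt_one_add_mul_exp (ha x hxI))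
  have hGy : ∀ x ∈ I, ∀ y ∈ J, HasDerivAt (fun s => G (x, s)) (G (x, y)) y := by
    intro x hxI y hyJ
    have hw : HasDerivAt (fun s => w (x, s)) _ y :=
      ((hdiff _ ⟨hxI, hyJ⟩).comp y (hasFDerivAt_prodMk_right x y).differentiableAt).hasDerivAt
    rw [Function.comp_def, hy x hxI y hyJ, sqrt_div' _ (hb y hyJ).le] at hw
    simpa only [G, mul_comm] using
      hw.add_mul_const_of_sub_inv (hasDerivAt_sqrt_one_add_mul_exp (hb y hyJ))
  obtain ⟨η, hη⟩ := hIconn.exists_eq_mul_exp_add_of_hasDerivAt_partial_self hJconn hGx hGy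
  refine ⟨η, fun x hxI y hyJ => ?_⟩
  rw [sqrt_mul (ha x hxI).le, ← hη x hxI y hyJ]
  ring

/-- Solving the linear first-order system
`∂w/∂x = w + √((1 + b e^{2y})/(1 + a e^{2x}))`, `∂w/∂y = w + √((1 + a e^{2x})/(1 + b e^{2y}))`
when both factors are positive:
`w(x,y) = −√((1 + a e^{2x})(1 + b e^{2y})) + η e^{x+y}` for some constant `η`. -/
theorem linear_system_sqrt_neg (a b : ℝ) (I J : Set ℝ)
    (hIopen : IsOpen I) (hIconn : I.OrdConnected)
    (hJopen : IsOpen J) (hJconn : J.OrdConnected)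
    (ha : ∀ x ∈ I, 0 < 1 + a * Real.exp (2 * x))
    (hb : ∀ y ∈ J, 0 < 1 + b * Real.exp (2 * y))
    (w : ℝ × ℝ → ℝ)
    (hdiff : ∀ p ∈ I ×ˢ J, DifferentiableAt ℝ w p)
    (hx : ∀ x ∈ I, ∀ y ∈ J, deriv (fun t => w (t, y)) x =
      w (x, y) + Real.sqrt ((1 + b * Real.exp (2 * y)) / (1 + a * Real.exp (2 * x))))
    (hy : ∀ x ∈ I, ∀ y ∈ J, deriv (fun s => w (x, s)) y =
      w (x, y) + Real.sqrt ((1 + a * Real.exp (2 * x)) / (1 + b * Real.exp (2 * y)))) :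
    ∃ η : ℝ, ∀ x ∈ I, ∀ y ∈ J,
      w (x, y) = -Real.sqrt ((1 + a * Real.exp (2 * x)) * (1 + b * Real.exp (2 * y)))
        + η * Real.exp (x + y) :=
  linear_system_sqrt_neg_general a b I J hIconn hJconn ha hb w hdiff hx hy
end

section
/- Let a, b ∈ ℝ and let I, J ⊆ ℝ be open intervals such that 1 + a·e^{2x} < 0 for all x ∈ I and 1 + b·e^{2y} < 0 for all y ∈ J. Let w : I × J → ℝ be differentiable with ∂w/∂x = w + √((1 + b·e^{2y})/(1 + a·e^{2x})) and ∂w/∂y = w + √((1 + a·e^{2x})/(1 + b·e^{2y})) at every (x,y) ∈ I × J. Then there exists a constant η ∈ ℝ such that w(x,y) = √((1 + a·e^{2x})(1 + b·e^{2y})) + η·e^{x+y} for all (x,y) ∈ I × J. -/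
/-!
Along each coordinate line the system is the linear ODE `f' = f + r`, whose solutions differ
from a particular one by a multiple of `eᵗ`. Since `A = 1 + a e^{2x}` satisfies `A' = 2(A - 1)`,
and `√(C/A) = -C/√(AC)` for `A, C < 0`, the function `√(A(x) B(y))` is a particular solution in
both directions. Hence `(w - √(AB)) e^{-(x+y)}` is constant in `x` and in `y` separately, and so
constant on the rectangle `I × J`.
-/

open Real Set

theorem Convex.eq_of_hasDerivWithinAt_eq_zero {E : Type*} [NormedAddCommGroup E]
    [NormedSpace ℝ E] {s : Set ℝ} (hs : Convex ℝ s) {g : ℝ → E}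
    (hg : ∀ x ∈ s, HasDerivWithinAt g 0 s x) {x y : ℝ} (hx : x ∈ s) (hy : y ∈ s) :
    g x = g y := by
  simpa [sub_eq_zero, eq_comm] using
    hs.norm_image_sub_le_of_norm_hasDerivWithin_le hg (fun _ _ => norm_zero.le) hx hy

theorem Convex.mul_exp_neg_eq_of_hasDerivWithinAt_self {s : Set ℝ} (hs : Convex ℝ s)
    {u : ℝ → ℝ} (hu : ∀ x ∈ s, HasDerivWithinAt u (u x) s x) {x y : ℝ} (hx : x ∈ s)
    (hy : y ∈ s) : u x * exp (-x) = u y * exp (-y) :=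
  hs.eq_of_hasDerivWithinAt_eq_zero (g := fun t => u t * exp (-t))
    (fun t ht => ((hu t ht).mul (hasDerivAt_neg t).exp.hasDerivWithinAt).congr_deriv (by ring))
    hx hy

theorem Convex.sub_mul_exp_neg_eq_of_hasDerivWithinAt {s : Set ℝ} (hs : Convex ℝ s)
    {f φ r : ℝ → ℝ} (hf : ∀ x ∈ s, HasDerivWithinAt f (f x + r x) s x)
    (hφ : ∀ x ∈ s, HasDerivWithinAt φ (φ x + r x) s x) {x y : ℝ} (hx : x ∈ s) (hy : y ∈ s) :
    (f x - φ x) * exp (-x) = (f y - φ y) * exp (-y) :=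
  hs.mul_exp_neg_eq_of_hasDerivWithinAt_self (u := f - φ)
    (fun t ht => ((hf t ht).sub (hφ t ht)).congr_deriv (by simp only [Pi.sub_apply]; ring)) hx hy

theorem Real.sqrt_div_eq_abs_div_sqrt_mul (A C : ℝ) : √(C / A) = |C| / √(A * C) := by
  rcases eq_or_ne C 0 with rfl | hC
  · simp
  rw [← sqrt_sq_eq_abs, ← sqrt_div (sq_nonneg C), sq, mul_div_mul_right _ _ hC]

theorem hasDerivAt_one_add_mul_exp_two_mul (a x : ℝ) :
    HasDerivAt (fun t => 1 + a * exp (2 * t)) (2 * ((1 + a * exp (2 * x)) - 1)) x :=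
  ((((hasDerivAt_id x).const_mul 2).exp.const_mul a).const_add 1).congr_deriv
    (by simp only [id_eq, mul_one, add_sub_cancel_left]; ring)

theorem hasDerivAt_sqrt_one_add_mul_exp_two_mul_mul {a C x : ℝ}
    (ha : 1 + a * exp (2 * x) < 0) (hC : C < 0) :
    HasDerivAt (fun t => √((1 + a * exp (2 * t)) * C))
      (√((1 + a * exp (2 * x)) * C) + √(C / (1 + a * exp (2 * x)))) x := by
  refine (((hasDerivAt_one_add_mul_exp_two_mul a x).mul_const C).sqrt
    (mul_pos_of_neg_of_neg ha hC).ne').congr_deriv ?_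
  generalize 1 + a * exp (2 * x) = A at ha ⊢
  have hAC : 0 < A * C := mul_pos_of_neg_of_neg ha hC
  have hS : √(A * C) ^ 2 = A * C := sq_sqrt hAC.le
  have hS0 : √(A * C) ≠ 0 := (sqrt_pos.2 hAC).ne'
  rw [sqrt_div_eq_abs_div_sqrt_mul, abs_of_neg hC]
  field_simp
  linarith

theorem Convex.sub_sqrt_mul_exp_neg_eq_of_hasDerivAt {s : Set ℝ}
    (hs : Convex ℝ s) {a C : ℝ} (ha : ∀ x ∈ s, 1 + a * exp (2 * x) < 0) (hC : C < 0)
    {f : ℝ → ℝ} (hf : ∀ x ∈ s, HasDerivAt f (f x + √(C / (1 + a * exp (2 * x)))) x)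
    {x y : ℝ} (hx : x ∈ s) (hy : y ∈ s) :
    (f x - √((1 + a * exp (2 * x)) * C)) * exp (-x) =
      (f y - √((1 + a * exp (2 * y)) * C)) * exp (-y) :=
  hs.sub_mul_exp_neg_eq_of_hasDerivWithinAt (fun t ht => (hf t ht).hasDerivWithinAt)
    (fun t ht => (hasDerivAt_sqrt_one_add_mul_exp_two_mul_mul (ha t ht) hC).hasDerivWithinAt)
    hx hy

section Partial

variable {E : Type*} [NormedAddCommGroup E] [NormedSpace ℝ E] {w : ℝ × ℝ → E} {x y : ℝ}

theorem DifferentiableAt.hasDerivAt_partial_fst (h : DifferentiableAt ℝ w (x, y)) :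
    HasDerivAt (fun t => w (t, y)) (deriv (fun t => w (t, y)) x) x :=
  (h.comp x (differentiableAt_id.prodMk (differentiableAt_const y))).hasDerivAt

theorem DifferentiableAt.hasDerivAt_partial_snd (h : DifferentiableAt ℝ w (x, y)) :
    HasDerivAt (fun s => w (x, s)) (deriv (fun s => w (x, s)) y) y :=
  (h.comp y ((differentiableAt_const x).prodMk differentiableAt_id)).hasDerivAt

end Partial

theorem linear_system_sqrt_pos_negfactors_general (a b : ℝ) (I J : Set ℝ)
    (hIconn : I.OrdConnected)
    (hJconn : J.OrdConnected)
    (ha : ∀ x ∈ I, 1 + a * Real.exp (2 * x) < 0)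
    (hb : ∀ y ∈ J, 1 + b * Real.exp (2 * y) < 0)
    (w : ℝ × ℝ → ℝ)
    (hdiff : ∀ p ∈ I ×ˢ J, DifferentiableAt ℝ w p)
    (hx : ∀ x ∈ I, ∀ y ∈ J, deriv (fun t => w (t, y)) x =
      w (x, y) + Real.sqrt ((1 + b * Real.exp (2 * y)) / (1 + a * Real.exp (2 * x))))
    (hy : ∀ x ∈ I, ∀ y ∈ J, deriv (fun s => w (x, s)) y =
      w (x, y) + Real.sqrt ((1 + a * Real.exp (2 * x)) / (1 + b * Real.exp (2 * y)))) :
    ∃ η : ℝ, ∀ x ∈ I, ∀ y ∈ J,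
      w (x, y) = Real.sqrt ((1 + a * Real.exp (2 * x)) * (1 + b * Real.exp (2 * y)))
        + η * Real.exp (x + y) := by
  rcases I.eq_empty_or_nonempty with rfl | ⟨x₀, hx₀⟩
  · exact ⟨0, by simp⟩
  rcases J.eq_empty_or_nonempty with rfl | ⟨y₀, hy₀⟩
  · exact ⟨0, by simp⟩
  have hconst_x : ∀ x ∈ I, ∀ y ∈ J,
      (w (x, y) - √((1 + a * exp (2 * x)) * (1 + b * exp (2 * y)))) * exp (-x) =
        (w (x₀, y) - √((1 + a * exp (2 * x₀)) * (1 + b * exp (2 * y)))) * exp (-x₀) :=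
    fun x hxI y hyJ => hIconn.convex.sub_sqrt_mul_exp_neg_eq_of_hasDerivAt ha
      (hb y hyJ) (fun t ht => hx t ht y hyJ ▸ (hdiff _ (mk_mem_prod ht hyJ)).hasDerivAt_partial_fst)
      hxI hx₀
  have hconst_y : ∀ y ∈ J,
      (w (x₀, y) - √((1 + a * exp (2 * x₀)) * (1 + b * exp (2 * y)))) * exp (-y) =
        (w (x₀, y₀) - √((1 + a * exp (2 * x₀)) * (1 + b * exp (2 * y₀)))) * exp (-y₀) := by
    intro y hyJ
    simp only [mul_comm (1 + a * exp (2 * x₀))]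
    exact hJconn.convex.sub_sqrt_mul_exp_neg_eq_of_hasDerivAt hb (ha x₀ hx₀)
      (fun s hs => hy x₀ hx₀ s hs ▸ (hdiff _ (mk_mem_prod hx₀ hs)).hasDerivAt_partial_snd)
      hyJ hy₀
  refine ⟨(w (x₀, y₀) - √((1 + a * exp (2 * x₀)) * (1 + b * exp (2 * y₀)))) * exp (-y₀) *
    exp (-x₀), fun x hxI y hyJ => ?_⟩
  calc w (x, y)
      = √((1 + a * exp (2 * x)) * (1 + b * exp (2 * y))) +
          (w (x, y) - √((1 + a * exp (2 * x)) * (1 + b * exp (2 * y)))) * exp (-x) * exp (-y) *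
            exp (x + y) := by
        rw [mul_assoc, mul_assoc, ← exp_add, ← exp_add, show -x + (-y + (x + y)) = 0 by ring,
          exp_zero]
        ring
    _ = _ := by rw [hconst_x x hxI y hyJ, mul_right_comm _ (exp (-x₀)), hconst_y y hyJ]

/-- Solving the linear first-order system
`∂w/∂x = w + √((1 + b e^{2y})/(1 + a e^{2x}))`, `∂w/∂y = w + √((1 + a e^{2x})/(1 + b e^{2y}))`
when both factors are negative:
`w(x,y) = √((1 + a e^{2x})(1 + b e^{2y})) + η e^{x+y}` for some constant `η`. -/
theorem linear_system_sqrt_pos_negfactors (a b : ℝ) (I J : Set ℝ)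
    (hIopen : IsOpen I) (hIconn : I.OrdConnected)
    (hJopen : IsOpen J) (hJconn : J.OrdConnected)
    (ha : ∀ x ∈ I, 1 + a * Real.exp (2 * x) < 0)
    (hb : ∀ y ∈ J, 1 + b * Real.exp (2 * y) < 0)
    (w : ℝ × ℝ → ℝ)
    (hdiff : ∀ p ∈ I ×ˢ J, DifferentiableAt ℝ w p)
    (hx : ∀ x ∈ I, ∀ y ∈ J, deriv (fun t => w (t, y)) x =
      w (x, y) + Real.sqrt ((1 + b * Real.exp (2 * y)) / (1 + a * Real.exp (2 * x))))
    (hy : ∀ x ∈ I, ∀ y ∈ J, deriv (fun s => w (x, s)) y =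
      w (x, y) + Real.sqrt ((1 + a * Real.exp (2 * x)) / (1 + b * Real.exp (2 * y)))) :
    ∃ η : ℝ, ∀ x ∈ I, ∀ y ∈ J,
      w (x, y) = Real.sqrt ((1 + a * Real.exp (2 * x)) * (1 + b * Real.exp (2 * y)))
        + η * Real.exp (x + y) :=
  linear_system_sqrt_pos_negfactors_general a b I J hIconn hJconn ha hb w hdiff hx hy
end

section
/- Let a, b ∈ ℝ and let I, J ⊆ ℝ be open intervals such that 1 + a·e^{2x} > 0 for all x ∈ I and 1 + b·e^{2y} > 0 for all y ∈ J. Let w : I × J → ℝ be differentiable with ∂w/∂x = w − √((1 + b·e^{2y})/(1 + a·e^{2x})) and ∂w/∂y = w − √((1 + a·e^{2x})/(1 + b·e^{2y})) at every (x,y) ∈ I × J. Then there exists a constant η ∈ ℝ such that w(x,y) = √((1 + a·e^{2x})(1 + b·e^{2y})) + η·e^{x+y} for all (x,y) ∈ I × J. -/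
/-!
Write `A = 1 + a e^{2x}` and `B = 1 + b e^{2y}`. Since `(√A)' = √A - 1/√A`, the function
`√A · √B` solves each of the two equations of the system, so `w - √(AB)` satisfies `∂ₓu = u`
and `∂ᵧu = u`, i.e. `(w - √(AB)) e^{-(x+y)}` has vanishing partial derivatives on the
rectangle `I × J` and is constant there.
-/

open Real Set

theorem Set.OrdConnected.eq_of_hasDerivAt_zero {s : Set ℝ} (hs : s.OrdConnected) {f : ℝ → ℝ}
    (hf : ∀ x ∈ s, HasDerivAt f 0 x) {x y : ℝ} (hx : x ∈ s) (hy : y ∈ s) : f x = f y := by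
  wlog hxy : x ≤ y generalizing x y
  · exact (this hy hx (le_of_not_ge hxy)).symm
  have hsub : Icc x y ⊆ s := hs.out hx hy
  exact (constant_of_has_deriv_right_zero
    (fun z hz => (hf z (hsub hz)).continuousAt.continuousWithinAt)
    (fun z hz => (hf z (hsub (Ico_subset_Icc_self hz))).hasDerivWithinAt) y
    (right_mem_Icc.2 hxy)).symm

theorem hasDerivAt_sub_mul_exp_neg {f g : ℝ → ℝ} {h x : ℝ} (hf : HasDerivAt f (f x - h) x)
    (hg : HasDerivAt g (g x - h) x) :
    HasDerivAt (fun t => (f t - g t) * exp (-t)) 0 x := by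
  refine ((hf.sub hg).mul (hasDerivAt_neg x).exp).congr_deriv ?_
  simp only [Pi.sub_apply]
  ring

theorem sub_eq_sub_mul_exp_sub {s : Set ℝ} (hs : s.OrdConnected) {f g h : ℝ → ℝ}
    (hf : ∀ x ∈ s, HasDerivAt f (f x - h x) x) (hg : ∀ x ∈ s, HasDerivAt g (g x - h x) x)
    {x x' : ℝ} (hx : x ∈ s) (hx' : x' ∈ s) :
    f x - g x = (f x' - g x') * exp (x - x') := by
  have hconst := hs.eq_of_hasDerivAt_zero
    (fun z hz => hasDerivAt_sub_mul_exp_neg (hf z hz) (hg z hz)) hx hx'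
  calc f x - g x = (f x - g x) * exp (-x) * exp x := by
        rw [mul_assoc, ← exp_add, neg_add_cancel, exp_zero, mul_one]
    _ = (f x' - g x') * exp (x - x') := by
        rw [hconst, mul_assoc, ← exp_add, neg_add_eq_sub]

theorem hasDerivAt_sqrt_one_add_mul_exp_two_mul {a x : ℝ} (hx : 0 < 1 + a * exp (2 * x)) :
    HasDerivAt (fun t => √(1 + a * exp (2 * t)))
      (√(1 + a * exp (2 * x)) - (√(1 + a * exp (2 * x)))⁻¹) x := by
  have hA : HasDerivAt (fun t => 1 + a * exp (2 * t)) (a * (exp (2 * x) * 2)) x :=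
    ((((hasDerivAt_id x).const_mul 2).exp).const_mul a |>.const_add 1).congr_deriv (by simp)
  refine (hA.sqrt hx.ne').congr_deriv ?_
  have hs : √(1 + a * exp (2 * x)) ≠ 0 := (sqrt_pos.2 hx).ne'
  field_simp
  rw [sq_sqrt hx.le]
  ring

theorem hasDerivAt_sqrt_mul_sqrt_one_add_mul_exp_two_mul (c : ℝ) {a x : ℝ}
    (hx : 0 < 1 + a * exp (2 * x)) :
    HasDerivAt (fun t => √c * √(1 + a * exp (2 * t)))
      (√c * √(1 + a * exp (2 * x)) - √(c / (1 + a * exp (2 * x)))) x := by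
  refine ((hasDerivAt_sqrt_one_add_mul_exp_two_mul hx).const_mul √c).congr_deriv ?_
  rw [sqrt_div' c hx.le]
  ring

theorem linear_system_sqrt_pos_general (a b : ℝ) (I J : Set ℝ)
    (hIconn : I.OrdConnected)
    (hJconn : J.OrdConnected)
    (ha : ∀ x ∈ I, 0 < 1 + a * Real.exp (2 * x))
    (hb : ∀ y ∈ J, 0 < 1 + b * Real.exp (2 * y))
    (w : ℝ × ℝ → ℝ)
    (hdiff : ∀ p ∈ I ×ˢ J, DifferentiableAt ℝ w p)
    (hx : ∀ x ∈ I, ∀ y ∈ J, deriv (fun t => w (t, y)) x =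
      w (x, y) - Real.sqrt ((1 + b * Real.exp (2 * y)) / (1 + a * Real.exp (2 * x))))
    (hy : ∀ x ∈ I, ∀ y ∈ J, deriv (fun s => w (x, s)) y =
      w (x, y) - Real.sqrt ((1 + a * Real.exp (2 * x)) / (1 + b * Real.exp (2 * y)))) :
    ∃ η : ℝ, ∀ x ∈ I, ∀ y ∈ J,
      w (x, y) = Real.sqrt ((1 + a * Real.exp (2 * x)) * (1 + b * Real.exp (2 * y)))
        + η * Real.exp (x + y) := by
  rcases (I ×ˢ J).eq_empty_or_nonempty with hIJ | ⟨⟨x₀, y₀⟩, hx₀, hy₀⟩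
  · exact ⟨0, fun x hxI y hyJ => absurd (hIJ ▸ mk_mem_prod hxI hyJ) (notMem_empty _)⟩
  set A : ℝ → ℝ := fun x => √(1 + a * exp (2 * x))
  set B : ℝ → ℝ := fun y => √(1 + b * exp (2 * y))
  have hwx : ∀ y ∈ J, ∀ x ∈ I, HasDerivAt (fun t => w (t, y))
      (w (x, y) - √((1 + b * exp (2 * y)) / (1 + a * exp (2 * x)))) x := fun y hyJ x hxI =>
    hx x hxI y hyJ ▸ ((hdiff _ (mk_mem_prod hxI hyJ)).comp x
      (differentiableAt_id.prodMk (differentiableAt_const y))).hasDerivAt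
  have hwy : ∀ x ∈ I, ∀ y ∈ J, HasDerivAt (fun s => w (x, s))
      (w (x, y) - √((1 + a * exp (2 * x)) / (1 + b * exp (2 * y)))) y := fun x hxI y hyJ =>
    hy x hxI y hyJ ▸ ((hdiff _ (mk_mem_prod hxI hyJ)).comp y
      ((differentiableAt_const x).prodMk differentiableAt_id)).hasDerivAt
  have along_x : ∀ x ∈ I, ∀ y ∈ J,
      w (x, y) - B y * A x = (w (x₀, y) - B y * A x₀) * exp (x - x₀) := fun x hxI y hyJ =>
    sub_eq_sub_mul_exp_sub hIconn (hwx y hyJ)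
      (fun z hz => hasDerivAt_sqrt_mul_sqrt_one_add_mul_exp_two_mul _ (ha z hz)) hxI hx₀
  have along_y : ∀ y ∈ J,
      w (x₀, y) - A x₀ * B y = (w (x₀, y₀) - A x₀ * B y₀) * exp (y - y₀) := fun y hyJ =>
    sub_eq_sub_mul_exp_sub hJconn (hwy x₀ hx₀)
      (fun z hz => hasDerivAt_sqrt_mul_sqrt_one_add_mul_exp_two_mul _ (hb z hz)) hyJ hy₀
  refine ⟨(w (x₀, y₀) - A x₀ * B y₀) * exp (-(x₀ + y₀)), fun x hxI y hyJ => ?_⟩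
  have hexp : exp (x - x₀) * exp (y - y₀) = exp (-(x₀ + y₀)) * exp (x + y) := by
    rw [← exp_add, ← exp_add]
    ring_nf
  rw [sqrt_mul (ha x hxI).le]
  linear_combination along_x x hxI y hyJ + exp (x - x₀) * along_y y hyJ
    + (w (x₀, y₀) - A x₀ * B y₀) * hexp

/-- Solving the linear first-order system
`∂w/∂x = w − √((1 + b e^{2y})/(1 + a e^{2x}))`, `∂w/∂y = w − √((1 + a e^{2x})/(1 + b e^{2y}))`
when both factors are positive:
`w(x,y) = √((1 + a e^{2x})(1 + b e^{2y})) + η e^{x+y}` for some constant `η`. -/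
theorem linear_system_sqrt_pos (a b : ℝ) (I J : Set ℝ)
    (hIopen : IsOpen I) (hIconn : I.OrdConnected)
    (hJopen : IsOpen J) (hJconn : J.OrdConnected)
    (ha : ∀ x ∈ I, 0 < 1 + a * Real.exp (2 * x))
    (hb : ∀ y ∈ J, 0 < 1 + b * Real.exp (2 * y))
    (w : ℝ × ℝ → ℝ)
    (hdiff : ∀ p ∈ I ×ˢ J, DifferentiableAt ℝ w p)
    (hx : ∀ x ∈ I, ∀ y ∈ J, deriv (fun t => w (t, y)) x =
      w (x, y) - Real.sqrt ((1 + b * Real.exp (2 * y)) / (1 + a * Real.exp (2 * x))))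
    (hy : ∀ x ∈ I, ∀ y ∈ J, deriv (fun s => w (x, s)) y =
      w (x, y) - Real.sqrt ((1 + a * Real.exp (2 * x)) / (1 + b * Real.exp (2 * y)))) :
    ∃ η : ℝ, ∀ x ∈ I, ∀ y ∈ J,
      w (x, y) = Real.sqrt ((1 + a * Real.exp (2 * x)) * (1 + b * Real.exp (2 * y)))
        + η * Real.exp (x + y) :=
  linear_system_sqrt_pos_general a b I J hIconn hJconn ha hb w hdiff hx hy
end

section
/- Let v₁, v₃, c₁₃, c ∈ ℝ³ and d₁₃, d₃₁ ∈ ℝ with d₃₁ ≠ 0 satisfy: ⟨v₁,v₁⟩ = ⟨v₃,v₃⟩ = 1, ⟨c₁₃,c₁₃⟩ = −1, the right-angle conditions ⟨c₁₃ ⊗ v₃, c₁₃ ⊗ c⟩ = 0 and ⟨c₁₃ ⊗ v₁, c₁₃ ⊗ c⟩ = 0, and ⟨v₃,c₁₃⟩ = −sinh d₃₁, ⟨v₁,c₁₃⟩ = −sinh d₁₃, ⟨v₁,v₃⟩ = −cosh(d₁₃ + d₃₁). Then ⟨v₁, ⟨v₃,c⟩·v₃ − c⟩ = −⟨v₃,c⟩·sinh(d₁₃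 + d₃₁)·coth(d₃₁). -/
lemma lcross_ldot (x y u v : Fin 3 → ℝ) :
    ldot (lcross x y) (lcross u v) = ldot x v * ldot y u - ldot x u * ldot y v := by
  simp [ldot, lcross]; ring

lemma ldot_smul_sub (v w : Fin 3 → ℝ) (a : ℝ) (u : Fin 3 → ℝ) :
    ldot v (a • w - u) = a * ldot v w - ldot v u := by
  simp [ldot]; ring

lemma ldot_comm (x y : Fin 3 → ℝ) : ldot x y = ldot y x := by
  simp [ldot]; ring

/-- Key computation in the characterization of conformal variations:
`⟨v₁, ⟨v₃,c⟩ v₃ − c⟩ = −⟨v₃,c⟩ sinh(d₁₃ + d₃₁) coth d₃₁`. -/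
theorem conformal_variation_identity (v₁ v₃ c₁₃ c : Fin 3 → ℝ) (d₁₃ d₃₁ : ℝ)
    (hd₃₁ : d₃₁ ≠ 0)
    (hv₁ : ldot v₁ v₁ = 1) (hv₃ : ldot v₃ v₃ = 1) (hc₁₃ : ldot c₁₃ c₁₃ = -1)
    (hperp₁ : ldot (lcross c₁₃ v₃) (lcross c₁₃ c) = 0)
    (hperp₂ : ldot (lcross c₁₃ v₁) (lcross c₁₃ c) = 0)
    (hv₃c₁₃ : ldot v₃ c₁₃ = -Real.sinh d₃₁)
    (hv₁c₁₃ : ldot v₁ c₁₃ = -Real.sinh d₁₃)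
    (hv₁v₃ : ldot v₁ v₃ = -Real.cosh (d₁₃ + d₃₁)) :
    ldot v₁ (ldot v₃ c • v₃ - c)
      = -ldot v₃ c * Real.sinh (d₁₃ + d₃₁) * coth d₃₁ := by
  have hs : Real.sinh d₃₁ ≠ 0 := Real.sinh_ne_zero.mpr hd₃₁
  rw [lcross_ldot, hc₁₃, hv₃c₁₃] at hperp₁
  rw [lcross_ldot, hc₁₃, hv₁c₁₃] at hperp₂
  -- from hperp₁ : ⟨c₁₃,c⟩ = ⟨v₃,c⟩ / sinh d₃₁
  have h1 : ldot c₁₃ c = ldot v₃ c / Real.sinh d₃₁ := by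
    field_simp
    nlinarith [hperp₁]
  have h2 : ldot v₁ c = ldot v₃ c * Real.sinh d₁₃ / Real.sinh d₃₁ := by
    rw [h1] at hperp₂
    field_simp at hperp₂ ⊢
    nlinarith [hperp₂]
  rw [ldot_smul_sub, hv₁v₃, h2, coth, Real.sinh_add, Real.cosh_add]
  have hc : Real.cosh d₃₁ ^ 2 = 1 + Real.sinh d₃₁ ^ 2 := by
    nlinarith [Real.cosh_sq_sub_sinh_sq d₃₁]
  field_simp
  linear_combination (ldot v₃ c * Real.sinh d₁₃) * hc
end
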